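/- arXiv:2404.01788 — 6 statements merged into one kernel-verified Lean document; each statement's English description precedes it below -/
import Mathlib

section
/- For every positive integer n and every subset I of {1,2,...,n-1}, the number of permutations π of {1,...,n} whose successor set SUC(π) equals I is equal to the number of permutations π of {1,...,n} whose fixed-point set FIX(π) equals I. -/
open Finset

/-- The one-line notation value of `π` at position `k ∈ {1,…,n}`:
`oneLine π k = π(k)` with `1`-indexed positions and values. -/
def oneLine {n : ℕ} (π : Equiv.Perm (Fin n)) (k : ℕ) : ℕ :=
  if h : k - 1 < n then ((π ⟨k - 1, h⟩ : Fin n) : ℕ) + 1 else k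

/-- `SUC(π) = {i ∈ {1,…,n-1} : π(i+1) = π(i)+1}` (position set). -/
def SUC {n : ℕ} (π : Equiv.Perm (Fin n)) : Finset ℕ :=
  (Finset.Icc 1 (n - 1)).filter (fun i => oneLine π (i + 1) = oneLine π i + 1)

/-- `FIX(π) = {i ∈ {1,…,n-1} : π(i) = i}` (position set). -/
def FIX {n : ℕ} (π : Equiv.Perm (Fin n)) : Finset ℕ :=
  (Finset.Icc 1 (n - 1)).filter (fun i => oneLine π i = i)

/-- `Asc₂(π) = {π(i+1) : i ∈ {1,…,n-1}, π(i+1) ≥ π(i)+2}` (value set). -/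
def Asc2 {n : ℕ} (π : Equiv.Perm (Fin n)) : Finset ℕ :=
  ((Finset.Icc 1 (n - 1)).filter (fun i => oneLine π i + 2 ≤ oneLine π (i + 1))).image
    (fun i => oneLine π (i + 1))

/-- `Des(π) = {π(i+1) : i ∈ {1,…,n-1}, π(i) > π(i+1)}` (value set). -/
def DesSet {n : ℕ} (π : Equiv.Perm (Fin n)) : Finset ℕ :=
  ((Finset.Icc 1 (n - 1)).filter (fun i => oneLine π (i + 1) < oneLine π i)).image
    (fun i => oneLine π (i + 1))

/-- `Suc(π) = {π(i+1) : i ∈ {1,…,n-1}, π(i+1) = π(i)+1}` (value set). -/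
def SucSet {n : ℕ} (π : Equiv.Perm (Fin n)) : Finset ℕ :=
  ((Finset.Icc 1 (n - 1)).filter (fun i => oneLine π (i + 1) = oneLine π i + 1)).image
    (fun i => oneLine π (i + 1))

/-- `Aexc(π) = {π(i) : i ∈ {2,…,n}, π(i) < i}` (value set). -/
def Aexc {n : ℕ} (π : Equiv.Perm (Fin n)) : Finset ℕ :=
  ((Finset.Icc 2 n).filter (fun i => oneLine π i < i)).image (fun i => oneLine π i)

/-- `Êxc(π) = {π(i) : i ∈ {2,…,n}, π(i) > i}` (value set). -/
def ExcHat {n : ℕ} (π : Equiv.Perm (Fin n)) : Finset ℕ :=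
  ((Finset.Icc 2 n).filter (fun i => i < oneLine π i)).image (fun i => oneLine π i)

/-- `F̂ix(π) = {π(i) : i ∈ {2,…,n}, π(i) = i}` (value set). -/
def FixHat {n : ℕ} (π : Equiv.Perm (Fin n)) : Finset ℕ :=
  ((Finset.Icc 2 n).filter (fun i => oneLine π i = i)).image (fun i => oneLine π i)

/-- `depth(π) = ∑_{i : π(i) > i} (π(i) − i)`. -/
def depthStat {n : ℕ} (π : Equiv.Perm (Fin n)) : ℕ :=
  ∑ i ∈ (Finset.Icc 1 n).filter (fun i => i < oneLine π i), (oneLine π i - i)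

/-- `drp(π) = ∑_{i ∈ {1,…,n-1} : π(i) > π(i+1)} (π(i) − π(i+1))`. -/
def drpStat {n : ℕ} (π : Equiv.Perm (Fin n)) : ℕ :=
  ∑ i ∈ (Finset.Icc 1 (n - 1)).filter (fun i => oneLine π (i + 1) < oneLine π i),
    (oneLine π i - oneLine π (i + 1))

/-- `exc(π) = |{i ∈ {1,…,n} : π(i) > i}|`. -/
def excNum {n : ℕ} (π : Equiv.Perm (Fin n)) : ℕ :=
  ((Finset.Icc 1 n).filter (fun i => i < oneLine π i)).card

/-- `nexc(π) = |{i ∈ {1,…,n} : π(i) < i}|`. -/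
def nexcNum {n : ℕ} (π : Equiv.Perm (Fin n)) : ℕ :=
  ((Finset.Icc 1 n).filter (fun i => oneLine π i < i)).card

/-- `des(π) = |{i ∈ {1,…,n-1} : π(i) > π(i+1)}|`. -/
def desNum {n : ℕ} (π : Equiv.Perm (Fin n)) : ℕ :=
  ((Finset.Icc 1 (n - 1)).filter (fun i => oneLine π (i + 1) < oneLine π i)).card

/-- `asc(π) = |{i ∈ {1,…,n-1} : π(i) < π(i+1)}|`. -/
def ascNum {n : ℕ} (π : Equiv.Perm (Fin n)) : ℕ :=
  ((Finset.Icc 1 (n - 1)).filter (fun i => oneLine π i < oneLine π (i + 1))).card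

/-- `inv(π) = |{(i,j) : 1 ≤ i < j ≤ n, π(i) > π(j)}|`. -/
def invNum {n : ℕ} (π : Equiv.Perm (Fin n)) : ℕ :=
  (((Finset.Icc 1 n) ×ˢ (Finset.Icc 1 n)).filter
    (fun p : ℕ × ℕ => p.1 < p.2 ∧ oneLine π p.2 < oneLine π p.1)).card

open Equiv

section AUX
lemma val_succAbove' {m : ℕ} (v : Fin (m+1)) (x : Fin m) :
    (v.succAbove x : ℕ) = if (x:ℕ) < (v:ℕ) then (x:ℕ) else (x:ℕ)+1 := by
  unfold Fin.succAbove
  split_ifs with h1 h2 h2 <;> simp_all [Fin.lt_def]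

lemma succAbove_succ_iff {m : ℕ} (v : Fin (m+1)) (a b : Fin m)
    (hv : (v:ℕ) ≠ (a:ℕ)+1) :
    ((v.succAbove b : ℕ) = (v.succAbove a : ℕ) + 1) ↔ ((b:ℕ) = (a:ℕ)+1) := by
  rw [val_succAbove', val_succAbove']
  split_ifs <;> omega

def expandAt {m : ℕ} (p v : Fin (m+1)) (σ : Perm (Fin m)) : Perm (Fin (m+1)) :=
  (finSuccEquiv' p).trans (σ.optionCongr.trans (finSuccEquiv' v).symm)

@[simp] lemma expandAt_apply_self {m : ℕ} (p v : Fin (m+1)) (σ : Perm (Fin m)) :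
    expandAt p v σ p = v := by
  simp [expandAt, finSuccEquiv'_at, finSuccEquiv'_symm_none]

@[simp] lemma expandAt_apply_succAbove {m : ℕ} (p v : Fin (m+1)) (σ : Perm (Fin m)) (x : Fin m) :
    expandAt p v σ (p.succAbove x) = v.succAbove (σ x) := by
  simp [expandAt, finSuccEquiv'_succAbove, finSuccEquiv'_symm_some]

def contractAt {m : ℕ} (p : Fin (m+1)) (π : Perm (Fin (m+1))) : Perm (Fin m) :=
  Equiv.removeNone ((finSuccEquiv' p).symm.trans (π.trans (finSuccEquiv' (π p))))

lemma contractAt_spec {m : ℕ} (p : Fin (m+1)) (π : Perm (Fin (m+1))) (x : Fin m) :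
    (π p).succAbove (contractAt p π x) = π (p.succAbove x) := by
  have hne : π (p.succAbove x) ≠ π p := by
    intro h
    exact Fin.succAbove_ne p x (π.injective h)
  obtain ⟨z, hz⟩ : ∃ z, finSuccEquiv' (π p) (π (p.succAbove x)) = some z := by
    cases h : finSuccEquiv' (π p) (π (p.succAbove x)) with
    | none =>
        exfalso; apply hne
        have := congrArg (finSuccEquiv' (π p)).symm h
        simpa [finSuccEquiv'_symm_none] using this
    | some z => exact ⟨z, rfl⟩
  have h1 : some (contractAt p π x)
      = ((finSuccEquiv' p).symm.trans (π.trans (finSuccEquiv' (π p)))) (some x) := by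
    apply Equiv.removeNone_some
    refine ⟨z, ?_⟩
    simpa [Equiv.trans_apply, finSuccEquiv'_symm_some] using hz
  have h2 : some (contractAt p π x) = finSuccEquiv' (π p) (π (p.succAbove x)) := by
    simpa [Equiv.trans_apply, finSuccEquiv'_symm_some] using h1
  have := congrArg (finSuccEquiv' (π p)).symm h2
  simpa [finSuccEquiv'_symm_some] using this

lemma contractAt_expandAt {m : ℕ} (p v : Fin (m+1)) (σ : Perm (Fin m)) :
    contractAt p (expandAt p v σ) = σ := by
  ext x
  have h := contractAt_spec p (expandAt p v σ) x
  rw [expandAt_apply_self] at h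
  rw [expandAt_apply_succAbove] at h
  have := Fin.succAbove_right_injective (p := v) h
  rw [this]

lemma expandAt_contractAt {m : ℕ} (p : Fin (m+1)) (π : Perm (Fin (m+1))) :
    expandAt p (π p) (contractAt p π) = π := by
  ext y
  rcases eq_or_ne y p with rfl | hy
  · simp
  · obtain ⟨x, rfl⟩ := Fin.exists_succAbove_eq hy
    rw [expandAt_apply_succAbove, contractAt_spec]
end AUX

lemma oneLine_eq {n : ℕ} (π : Perm (Fin n)) {i : ℕ} (h1 : 1 ≤ i) (h2 : i ≤ n) :
    oneLine π i = (π ⟨i - 1, by omega⟩ : ℕ) + 1 := by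
  rw [oneLine, dif_pos]

lemma suc_iff' {n : ℕ} (π : Perm (Fin n)) {i : ℕ} (h1 : 1 ≤ i) (h2 : i + 1 ≤ n)
    (a b : Fin n) (ha : (a:ℕ) = i - 1) (hb : (b:ℕ) = i) :
    (oneLine π (i+1) = oneLine π i + 1) ↔ ((π b : ℕ) = (π a : ℕ) + 1) := by
  rw [oneLine_eq π (by omega) (by omega), oneLine_eq π h1 (by omega)]
  have e1 : (⟨i + 1 - 1, by omega⟩ : Fin n) = b := Fin.ext (show i + 1 - 1 = (b:ℕ) by omega)
  have e2 : (⟨i - 1, by omega⟩ : Fin n) = a := Fin.ext (show i - 1 = (a:ℕ) by omega)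
  rw [e1, e2]
  omega

lemma Acard (k : ℕ) : ∀ (n : ℕ) (J : Finset ℕ), J ⊆ Finset.Icc 1 (n-1) → J.card = k →
    (univ.filter (fun π : Perm (Fin n) => ∀ i ∈ J, oneLine π (i+1) = oneLine π i + 1)).card
      = (n - k).factorial := by
  induction k with
  | zero =>
    intro n J hJ hc
    rw [Finset.card_eq_zero] at hc
    subst hc
    simp [Finset.filter_true_of_mem, Fintype.card_perm]
  | succ k IH =>
    intro n J hJ hc
    have hne : J.Nonempty := by rw [← Finset.card_pos]; omega
    set j := J.max' hne with hjdef
    have hjJ : j ∈ J := J.max'_mem hne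
    have hj1 : 1 ≤ j ∧ j ≤ n - 1 := by simpa using hJ hjJ
    obtain ⟨m, rfl⟩ : ∃ m, n = m + 1 := ⟨n - 1, by omega⟩
    have hjm : 1 ≤ j ∧ j ≤ m := by omega
    have hiJ' : ∀ i ∈ J.erase j, 1 ≤ i ∧ i < j := by
      intro i hi
      obtain ⟨hij, hiJ⟩ := Finset.mem_erase.mp hi
      have h := Finset.mem_Icc.mp (hJ hiJ)
      have := J.le_max' i hiJ
      omega
    have hJ'sub : J.erase j ⊆ Finset.Icc 1 (m-1) := by
      intro i hi
      have := hiJ' i hi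
      rw [Finset.mem_Icc]
      omega
    have hc' : (J.erase j).card = k := by
      rw [Finset.card_erase_of_mem hjJ]; omega
    have hJsplit : ∀ i ∈ J, i = j ∨ i ∈ J.erase j := by
      intro i hi
      rcases eq_or_ne i j with h | h
      · exact Or.inl h
      · exact Or.inr (Finset.mem_erase.mpr ⟨h, hi⟩)
    obtain ⟨p, hp⟩ : ∃ p : Fin (m+1), (p:ℕ) = j := ⟨⟨j, by omega⟩, rfl⟩
    obtain ⟨xj, hxj⟩ : ∃ x : Fin m, (x:ℕ) = j - 1 := ⟨⟨j-1, by omega⟩, rfl⟩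
    obtain ⟨yj, hyj⟩ : ∃ y : Fin (m+1), (y:ℕ) = j - 1 := ⟨⟨j-1, by omega⟩, rfl⟩
    have hsa : ∀ (x : Fin m), (x:ℕ) < j → ((p.succAbove x : Fin (m+1)) : ℕ) = (x:ℕ) := by
      intro x hx
      rw [val_succAbove', hp, if_pos hx]
    have key : (univ.filter (fun π : Perm (Fin (m+1)) =>
          ∀ i ∈ J, oneLine π (i+1) = oneLine π i + 1)).card
        = (univ.filter (fun σ : Perm (Fin m) =>
          ∀ i ∈ J.erase j, oneLine σ (i+1) = oneLine σ i + 1)).card := by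
      refine Finset.card_bij' (fun π _ => contractAt p π)
        (fun σ _ => expandAt p ((σ xj).succ) σ) ?hi ?hj ?left ?right
      case hi =>
        intro π hπ
        simp only [Finset.mem_filter, Finset.mem_univ, true_and] at hπ ⊢
        have keyv : ∀ (x : Fin m) (y : Fin (m+1)), (y:ℕ) = (x:ℕ) → (x:ℕ) < j →
            π y = (π p).succAbove (contractAt p π x) := by
          intro x y hyx hx
          rw [contractAt_spec p π x]
          exact congrArg π (Fin.ext (hyx.trans (hsa x hx).symm))
        have hπp : ((π p : Fin (m+1)) : ℕ) = ((π yj : Fin (m+1)) : ℕ) + 1 :=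
          (suc_iff' π (by omega) (by omega) yj p hyj hp).mp (hπ j hjJ)
        have hvw : ((π p : Fin (m+1)) : ℕ) = ((contractAt p π xj : Fin m) : ℕ) + 1 := by
          have h := congrArg Fin.val (keyv xj yj (by omega) (by omega))
          rw [val_succAbove'] at h
          rw [h] at hπp
          split_ifs at hπp <;> omega
        intro i hi
        obtain ⟨hi1, hij⟩ := hiJ' i hi
        obtain ⟨xi, hxi⟩ : ∃ x : Fin m, (x:ℕ) = i := ⟨⟨i, by omega⟩, rfl⟩
        obtain ⟨xi1, hxi1⟩ : ∃ x : Fin m, (x:ℕ) = i - 1 := ⟨⟨i-1, by omega⟩, rfl⟩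
        obtain ⟨yi, hyi⟩ : ∃ y : Fin (m+1), (y:ℕ) = i := ⟨⟨i, by omega⟩, rfl⟩
        obtain ⟨yi1, hyi1⟩ : ∃ y : Fin (m+1), (y:ℕ) = i - 1 := ⟨⟨i-1, by omega⟩, rfl⟩
        rw [suc_iff' (contractAt p π) (by omega) (by omega) xi1 xi hxi1 hxi]
        have hπi := (suc_iff' π (by omega) (by omega) yi1 yi hyi1 hyi).mp
          (hπ i (Finset.mem_erase.mp hi).2)
        have e1 := congrArg Fin.val (keyv xi yi (by omega) (by omega))
        have e2 := congrArg Fin.val (keyv xi1 yi1 (by omega) (by omega))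
        rw [e1, e2] at hπi
        have hvne : ((π p : Fin (m+1)) : ℕ) ≠ ((contractAt p π xi1 : Fin m) : ℕ) + 1 := by
          rw [hvw]
          intro hcontra
          have h1 : contractAt p π xj = contractAt p π xi1 := Fin.ext (by omega)
          have h2 := congrArg Fin.val ((contractAt p π).injective h1)
          omega
        exact (succAbove_succ_iff _ _ _ hvne).mp hπi
      case hj =>
        intro σ hσ
        simp only [Finset.mem_filter, Finset.mem_univ, true_and] at hσ ⊢
        have hvw : (((σ xj).succ : Fin (m+1)) : ℕ) = ((σ xj : Fin m) : ℕ) + 1 := rfl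
        have keyv : ∀ (x : Fin m) (y : Fin (m+1)), (y:ℕ) = (x:ℕ) → (x:ℕ) < j →
            expandAt p ((σ xj).succ) σ y = (σ xj).succ.succAbove (σ x) := by
          intro x y hyx hx
          have hyx' : y = p.succAbove x := Fin.ext (hyx.trans (hsa x hx).symm)
          rw [hyx', expandAt_apply_succAbove]
        intro i hi
        rcases hJsplit i hi with rfl | hi'
        · rw [suc_iff' (expandAt p ((σ xj).succ) σ) (by omega) (by omega) yj p hyj hp]
          have h1 : expandAt p ((σ xj).succ) σ p = (σ xj).succ := expandAt_apply_self _ _ _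
          have h2 := congrArg Fin.val (keyv xj yj (by omega) (by omega))
          rw [val_succAbove'] at h2
          rw [h1, h2]
          rw [hvw]
          split_ifs <;> omega
        · obtain ⟨hi1, hij⟩ := hiJ' i hi'
          obtain ⟨xi, hxi⟩ : ∃ x : Fin m, (x:ℕ) = i := ⟨⟨i, by omega⟩, rfl⟩
          obtain ⟨xi1, hxi1⟩ : ∃ x : Fin m, (x:ℕ) = i - 1 := ⟨⟨i-1, by omega⟩, rfl⟩
          obtain ⟨yi, hyi⟩ : ∃ y : Fin (m+1), (y:ℕ) = i := ⟨⟨i, by omega⟩, rfl⟩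
          obtain ⟨yi1, hyi1⟩ : ∃ y : Fin (m+1), (y:ℕ) = i - 1 := ⟨⟨i-1, by omega⟩, rfl⟩
          rw [suc_iff' (expandAt p ((σ xj).succ) σ) (by omega) (by omega) yi1 yi hyi1 hyi]
          have hσi := (suc_iff' σ (by omega) (by omega) xi1 xi hxi1 hxi).mp (hσ i hi')
          have e1 := congrArg Fin.val (keyv xi yi (by omega) (by omega))
          have e2 := congrArg Fin.val (keyv xi1 yi1 (by omega) (by omega))
          rw [e1, e2]
          have hvne : (((σ xj).succ : Fin (m+1)) : ℕ) ≠ ((σ xi1 : Fin m) : ℕ) + 1 := by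
            rw [hvw]
            intro hcontra
            have h1 : σ xj = σ xi1 := Fin.ext (by omega)
            have h2 := congrArg Fin.val (σ.injective h1)
            omega
          exact (succAbove_succ_iff _ _ _ hvne).mpr hσi
      case left =>
        intro π hπ
        simp only [Finset.mem_filter, Finset.mem_univ, true_and] at hπ
        have keyv : ∀ (x : Fin m) (y : Fin (m+1)), (y:ℕ) = (x:ℕ) → (x:ℕ) < j →
            π y = (π p).succAbove (contractAt p π x) := by
          intro x y hyx hx
          rw [contractAt_spec p π x]
          exact congrArg π (Fin.ext (hyx.trans (hsa x hx).symm))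
        have hπp : ((π p : Fin (m+1)) : ℕ) = ((π yj : Fin (m+1)) : ℕ) + 1 :=
          (suc_iff' π (by omega) (by omega) yj p hyj hp).mp (hπ j hjJ)
        have hvw : ((contractAt p π xj).succ : Fin (m+1)) = π p := by
          apply Fin.ext
          have h := congrArg Fin.val (keyv xj yj (by omega) (by omega))
          rw [val_succAbove'] at h
          rw [h] at hπp
          rw [Fin.val_succ]
          split_ifs at hπp <;> omega
        show expandAt p ((contractAt p π xj).succ) (contractAt p π) = π
        rw [hvw, expandAt_contractAt]
      case right =>
        intro σ hσ
        show contractAt p (expandAt p ((σ xj).succ) σ) = σ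
        rw [contractAt_expandAt]
    rw [key, IH m (J.erase j) hJ'sub hc']
    congr 1
    omega





lemma fix_iff' {n : ℕ} (π : Perm (Fin n)) {i : ℕ} (h1 : 1 ≤ i) (h2 : i ≤ n)
    (a : Fin n) (ha : (a:ℕ) = i - 1) :
    (oneLine π i = i) ↔ π a = a := by
  rw [oneLine_eq π h1 h2]
  have e : (⟨i-1, by omega⟩ : Fin n) = a := Fin.ext (show i - 1 = (a:ℕ) by omega)
  rw [e, Fin.ext_iff]
  omega

lemma Bcard (n : ℕ) (J : Finset ℕ) (hJ : J ⊆ Finset.Icc 1 (n-1)) :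
    (univ.filter (fun π : Perm (Fin n) => ∀ i ∈ J, oneLine π i = i)).card
      = (n - J.card).factorial := by
  classical
  have step1 : (univ.filter (fun π : Perm (Fin n) => ∀ i ∈ J, oneLine π i = i))
      = (univ.filter (fun π : Perm (Fin n) =>
          ∀ x : Fin n, ¬ ¬ ((x:ℕ)+1 ∈ J) → π x = x)) := by
    ext π
    simp only [Finset.mem_filter, Finset.mem_univ, true_and, not_not]
    constructor
    · intro h x hx
      have hb := Finset.mem_Icc.mp (hJ hx)
      exact (fix_iff' π (by omega) (by omega) x (by omega)).mp (h _ hx)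
    · intro h i hi
      have hb := Finset.mem_Icc.mp (hJ hi)
      have hlt : i - 1 < n := by omega
      rw [fix_iff' π (by omega) (by omega) ⟨i-1, hlt⟩ rfl]
      have hx : ((⟨i-1, hlt⟩ : Fin n) : ℕ) + 1 ∈ J := by
        show i - 1 + 1 ∈ J
        rwa [Nat.sub_add_cancel (by omega)]
      exact h _ hx
  rw [step1]
  have step2 : (univ.filter (fun π : Perm (Fin n) =>
        ∀ x : Fin n, ¬ ¬ ((x:ℕ)+1 ∈ J) → π x = x)).card
      = Fintype.card {f : Perm (Fin n) // ∀ x : Fin n, ¬ ¬ ((x:ℕ)+1 ∈ J) → f x = x} :=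
    (Fintype.card_subtype _).symm
  rw [step2,
    Fintype.card_congr (Equiv.Perm.subtypeEquivSubtypePerm
      (fun x : Fin n => ¬ ((x:ℕ)+1 ∈ J))).symm,
    Fintype.card_perm]
  congr 1
  rw [Fintype.card_subtype]
  have h2 : (univ.filter (fun x : Fin n => ¬ ((x:ℕ)+1 ∈ J))).card
      = n - (univ.filter (fun x : Fin n => (x:ℕ)+1 ∈ J)).card := by
    rw [Finset.filter_not, Finset.card_sdiff_of_subset (Finset.filter_subset _ _), Finset.card_univ,
      Fintype.card_fin]
  have h3 : (univ.filter (fun x : Fin n => (x:ℕ)+1 ∈ J)).card = J.card := by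
    refine Finset.card_bij (fun x _ => (x:ℕ)+1) ?_ ?_ ?_
    · intro x hx; exact (Finset.mem_filter.mp hx).2
    · intro x hx y hy h
      have h' : (x:ℕ)+1 = (y:ℕ)+1 := h
      exact Fin.ext (by omega)
    · intro i hi
      have hb := Finset.mem_Icc.mp (hJ hi)
      refine ⟨⟨i-1, by omega⟩, ?_, ?_⟩
      · simp only [Finset.mem_filter, Finset.mem_univ, true_and]
        show i - 1 + 1 ∈ J
        rwa [Nat.sub_add_cancel (by omega)]
      · show i - 1 + 1 = i
        omega
  rw [h2, h3]



lemma cancel_lemma (U : Finset ℕ) (A B : Finset ℕ → ℕ)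
    (h : ∀ J ∈ U.powerset, ∑ K ∈ U.powerset.filter (fun K => J ⊆ K), A K
        = ∑ K ∈ U.powerset.filter (fun K => J ⊆ K), B K) :
    ∀ I ∈ U.powerset, A I = B I := by
  have main : ∀ d : ℕ, ∀ I ∈ U.powerset, (U \ I).card = d → A I = B I := by
    intro d
    induction d using Nat.strong_induction_on with
    | _ d IH =>
      intro I hI hd
      have hIU := Finset.mem_powerset.mp hI
      have hImem : I ∈ U.powerset.filter (fun K => I ⊆ K) := by
        simp only [Finset.mem_filter, Finset.mem_powerset]
        exact ⟨hIU, Finset.Subset.refl I⟩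
      have hsum := h I hI
      rw [← Finset.add_sum_erase _ A hImem, ← Finset.add_sum_erase _ B hImem] at hsum
      have heq : ∑ K ∈ (U.powerset.filter (fun K => I ⊆ K)).erase I, A K
          = ∑ K ∈ (U.powerset.filter (fun K => I ⊆ K)).erase I, B K := by
        apply Finset.sum_congr rfl
        intro K hK
        simp only [Finset.mem_erase, Finset.mem_filter, Finset.mem_powerset] at hK
        obtain ⟨hKne, hKU, hIK⟩ := hK
        have hlt : (U \ K).card < d := by
          rw [← hd, Finset.card_sdiff_of_subset hKU, Finset.card_sdiff_of_subset hIU]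
          have hss : I ⊂ K := lt_of_le_of_ne hIK (fun e => hKne e.symm)
          have h1 : I.card < K.card := Finset.card_lt_card hss
          have h2 : K.card ≤ U.card := Finset.card_le_card hKU
          omega
        exact IH _ hlt K (Finset.mem_powerset.mpr hKU) rfl
      omega
  exact fun I hI => main _ I hI rfl

lemma fiber_card {n : ℕ} (J : Finset ℕ) (hJn : J ⊆ Finset.Icc 1 (n-1))
    (S : Perm (Fin n) → Finset ℕ) (hS : ∀ π, S π ⊆ Finset.Icc 1 (n-1)) :
    ∑ K ∈ (Finset.Icc 1 (n-1)).powerset.filter (fun K => J ⊆ K),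
        (univ.filter (fun π : Perm (Fin n) => S π = K)).card
      = (univ.filter (fun π : Perm (Fin n) => J ⊆ S π)).card := by
  classical
  have H : ∀ π ∈ univ.filter (fun π : Perm (Fin n) => J ⊆ S π),
      S π ∈ (Finset.Icc 1 (n-1)).powerset.filter (fun K => J ⊆ K) := by
    intro π hπ
    simp only [Finset.mem_filter, Finset.mem_univ, true_and, Finset.mem_powerset] at hπ ⊢
    exact ⟨hS π, hπ⟩
  rw [Finset.card_eq_sum_card_fiberwise H]
  apply Finset.sum_congr rfl
  intro K hK
  have hJK : J ⊆ K := (Finset.mem_filter.mp hK).2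
  congr 1
  ext π
  simp only [Finset.mem_filter, Finset.mem_univ, true_and]
  constructor
  · intro h2
    exact ⟨h2 ▸ hJK, h2⟩
  · rintro ⟨h1, h2⟩
    exact h2


/-- For every positive integer n and every subset I of {1,…,n-1},
the number of permutations with SUC(π) = I equals the number with FIX(π) = I. -/



theorem stmt0 (n : ℕ) (hn : 0 < n) (I : Finset ℕ) (hI : I ⊆ Finset.Icc 1 (n - 1)) :
    (Finset.univ.filter (fun π : Equiv.Perm (Fin n) => SUC π = I)).card =
      (Finset.univ.filter (fun π : Equiv.Perm (Fin n) => FIX π = I)).card := by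
  classical
  have hcard : ∀ J ∈ (Finset.Icc 1 (n-1)).powerset,
      ∑ K ∈ (Finset.Icc 1 (n-1)).powerset.filter (fun K => J ⊆ K),
          (univ.filter (fun π : Perm (Fin n) => SUC π = K)).card
        = ∑ K ∈ (Finset.Icc 1 (n-1)).powerset.filter (fun K => J ⊆ K),
          (univ.filter (fun π : Perm (Fin n) => FIX π = K)).card := by
    intro J hJmem
    have hJU := Finset.mem_powerset.mp hJmem
    rw [fiber_card J hJU SUC (fun π => Finset.filter_subset _ _),
        fiber_card J hJU FIX (fun π => Finset.filter_subset _ _)]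
    have e1 : (univ.filter (fun π : Perm (Fin n) => J ⊆ SUC π))
        = (univ.filter (fun π : Perm (Fin n) =>
            ∀ i ∈ J, oneLine π (i+1) = oneLine π i + 1)) := by
      ext π
      simp only [Finset.mem_filter, Finset.mem_univ, true_and]
      constructor
      · intro h i hi
        have := h hi
        rw [SUC, Finset.mem_filter] at this
        exact this.2
      · intro h i hi
        rw [SUC, Finset.mem_filter]
        exact ⟨hJU hi, h i hi⟩
    have e2 : (univ.filter (fun π : Perm (Fin n) => J ⊆ FIX π))
        = (univ.filter (fun π : Perm (Fin n) => ∀ i ∈ J, oneLine π i = i)) := by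
      ext π
      simp only [Finset.mem_filter, Finset.mem_univ, true_and]
      constructor
      · intro h i hi
        have := h hi
        rw [FIX, Finset.mem_filter] at this
        exact this.2
      · intro h i hi
        rw [FIX, Finset.mem_filter]
        exact ⟨hJU hi, h i hi⟩
    rw [e1, e2, Acard J.card n J hJU rfl, Bcard n J hJU]
  exact cancel_lemma (Finset.Icc 1 (n-1)) _ _ hcard I (Finset.mem_powerset.mpr hI)
end

section
/- For every positive integer n and all subsets S₁, S₂, S₃ of {1,...,n}, the number of permutations π of {1,...,n} with (Asc₂(π), Des(π), Suc(π)) = (S₁, S₂, S₃) equals the number of permutations π of {1,...,n} with (Êxc(π), Aexc(π), F̂ix(π)) = (S₁, S₂, S₃). -/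
open Finset

/-!
Read `π : Perm (Fin (n + 1))` as the word `π 0 π 1 ⋯ π n` and cut it into blocks: the first block
runs from `π 0` to the largest letter `n`, and a new block starts at each later letter that is
smaller than all letters between `n` and itself (a cut). Closing every block into a cycle gives a
permutation `ρ`; put `σ i = ρ (i - 1)`. For a letter `v ≠ π 0`, its predecessor in the word and
`ρ⁻¹ v` compare with `v` in the same way: they coincide unless `v` is a cut, and then both are at
least `v`. As `σ⁻¹ v = ρ⁻¹ v + 1`, this turns `(Asc₂, Des, Suc)` of `π` into `(Êxc, Aexc, F̂ix)`
of `σ`. The map `π ↦ σ` is injective because the blocks are exactly the cycles of `ρ`, so the cuts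
are the minima of the cycles avoiding `n`, and they occur in the word in decreasing order.
-/

lemma Equiv.Perm.SameCycle.eq_of_apply_eq {α β : Type*} [Finite α] {f : Equiv.Perm α}
    {g : α → β} (hg : ∀ x, g (f x) = g x) {x y : α} (h : f.SameCycle x y) : g x = g y := by
  obtain ⟨k, -, rfl⟩ := h.exists_pow_eq'
  clear h
  induction k with
  | zero => rfl
  | succ k ih => rw [ih, pow_succ', Equiv.Perm.mul_apply, hg]

lemma oneLine_val_add_one {n : ℕ} (π : Equiv.Perm (Fin n)) (j : Fin n) :
    oneLine π (j + 1) = π j + 1 := by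
  simp [oneLine]

lemma oneLine_symm_add_one {n : ℕ} (π : Equiv.Perm (Fin n)) (v : Fin n) :
    oneLine π (π.symm v + 1) = v + 1 := by
  rw [oneLine_val_add_one, Equiv.apply_symm_apply]

lemma image_oneLine_filter_position {n : ℕ} (σ : Equiv.Perm (Fin (n + 1)))
    (P : ℕ → ℕ → Prop) [DecidableRel P] :
    ((Finset.Icc 2 (n + 1)).filter fun i => P i (oneLine σ i)).image (oneLine σ) =
      (Finset.univ.filter fun v => σ.symm v ≠ 0 ∧ P (σ.symm v + 1) (v + 1)).image
        fun v : Fin (n + 1) => (v : ℕ) + 1 := by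
  ext a
  simp only [Finset.mem_image, Finset.mem_filter, Finset.mem_Icc, Finset.mem_univ, true_and]
  constructor
  · rintro ⟨i, ⟨⟨hi2, hin⟩, hP⟩, rfl⟩
    obtain ⟨v, rfl⟩ : ∃ v : Fin (n + 1), (σ.symm v : ℕ) + 1 = i :=
      ⟨σ ⟨i - 1, by omega⟩, by simp; omega⟩
    have hv : σ.symm v ≠ 0 := by rw [Ne, Fin.ext_iff, Fin.val_zero]; omega
    rw [oneLine_symm_add_one] at hP ⊢
    exact ⟨v, ⟨hv, hP⟩, rfl⟩
  · rintro ⟨v, ⟨hv, hP⟩, rfl⟩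
    have hv' : (σ.symm v : ℕ) ≠ 0 := by rwa [Ne, Fin.ext_iff, Fin.val_zero] at hv
    refine ⟨σ.symm v + 1, ⟨⟨by omega, by omega⟩, ?_⟩, oneLine_symm_add_one σ v⟩
    rwa [oneLine_symm_add_one]

namespace PermWord

open Equiv

variable {n : ℕ}

section NextLetter

variable (π : Perm (Fin (n + 1)))

def nextLetter : Perm (Fin (n + 1)) :=
  (π.symm.trans (Equiv.addRight 1)).trans π

variable {π}

lemma nextLetter_apply (x : Fin (n + 1)) : nextLetter π x = π (π.symm x + 1) := rfl

lemma symm_nextLetter (x : Fin (n + 1)) : π.symm (nextLetter π x) = π.symm x + 1 := by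
  simp [nextLetter_apply]

lemma symm_nextLetter_symm (v : Fin (n + 1)) :
    π.symm ((nextLetter π).symm v) = π.symm v - 1 := by
  simp [nextLetter, sub_eq_add_neg]

lemma val_symm_nextLetter {x : Fin (n + 1)} (hx : π.symm x ≠ Fin.last n) :
    (π.symm (nextLetter π x) : ℕ) = π.symm x + 1 := by
  rw [symm_nextLetter, Fin.val_add_one_of_lt (Fin.lt_last_iff_ne_last.mpr hx)]

lemma nextLetter_of_symm_eq_last {x : Fin (n + 1)} (hx : π.symm x = Fin.last n) :
    nextLetter π x = π 0 := by
  rw [nextLetter_apply, hx, Fin.last_add_one]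

lemma val_symm_nextLetter_symm {v : Fin (n + 1)} (hv : π.symm v ≠ 0) :
    (π.symm ((nextLetter π).symm v) : ℕ) = π.symm v - 1 := by
  rw [symm_nextLetter_symm, Fin.coe_sub_one, if_neg hv]

lemma symm_nextLetter_ne_self {v : Fin (n + 1)} (hv : π.symm v ≠ 0) :
    (nextLetter π).symm v ≠ v := by
  intro h
  have := val_symm_nextLetter_symm hv
  rw [h] at this
  exact hv (Fin.ext (by rw [Fin.val_zero]; omega))

lemma oneLine_symm {v : Fin (n + 1)} (hv : π.symm v ≠ 0) :
    oneLine π (π.symm v) = (nextLetter π).symm v + 1 := by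
  have h := oneLine_symm_add_one π ((nextLetter π).symm v)
  rwa [val_symm_nextLetter_symm hv, Nat.sub_add_cancel (Nat.pos_of_ne_zero (by
    rwa [Ne, Fin.ext_iff, Fin.val_zero] at hv))] at h

variable (π) in
lemma image_oneLine_filter_consecutive (P : ℕ → ℕ → Prop) [DecidableRel P] :
    ((Finset.Icc 1 (n + 1 - 1)).filter fun i => P (oneLine π i) (oneLine π (i + 1))).image
        (fun i => oneLine π (i + 1)) =
      (Finset.univ.filter fun v => π.symm v ≠ 0 ∧ P ((nextLetter π).symm v + 1) (v + 1)).image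
        fun v : Fin (n + 1) => (v : ℕ) + 1 := by
  ext a
  simp only [Finset.mem_image, Finset.mem_filter, Finset.mem_Icc, Finset.mem_univ, true_and]
  constructor
  · rintro ⟨i, ⟨⟨hi1, hin⟩, hP⟩, rfl⟩
    obtain ⟨v, rfl⟩ : ∃ v : Fin (n + 1), (π.symm v : ℕ) = i :=
      ⟨π ⟨i, by omega⟩, by simp⟩
    have hv : π.symm v ≠ 0 := by rw [Ne, Fin.ext_iff, Fin.val_zero]; omega
    rw [oneLine_symm hv, oneLine_symm_add_one] at hP
    exact ⟨v, ⟨hv, hP⟩, (oneLine_symm_add_one π v).symm⟩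
  · rintro ⟨v, ⟨hv, hP⟩, rfl⟩
    have hv' : (π.symm v : ℕ) ≠ 0 := by rwa [Ne, Fin.ext_iff, Fin.val_zero] at hv
    refine ⟨π.symm v, ⟨⟨by omega, by omega⟩, ?_⟩, oneLine_symm_add_one π v⟩
    rwa [oneLine_symm hv, oneLine_symm_add_one]

end NextLetter

section Blocks

variable (π : Perm (Fin (n + 1)))

def IsCut (v : Fin (n + 1)) : Prop :=
  π.symm (Fin.last n) < π.symm v ∧
    ∀ u, π.symm (Fin.last n) < π.symm u → π.symm u < π.symm v → v < u

def IsStart (v : Fin (n + 1)) : Prop :=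
  π.symm v = 0 ∨ IsCut π v

instance : DecidablePred (IsCut π) := fun _ => by unfold IsCut; infer_instance

instance : DecidablePred (IsStart π) := fun _ => by unfold IsStart; infer_instance

def blockStart (x : Fin (n + 1)) : Fin (n + 1) :=
  π ((Finset.univ.filter fun j => j ≤ π.symm x ∧ IsStart π (π j)).max'
    ⟨0, by simp [IsStart]⟩)

variable {π}

lemma IsCut.symm_ne_zero {v : Fin (n + 1)} (hv : IsCut π v) : π.symm v ≠ 0 :=
  (lt_of_le_of_lt (Fin.zero_le _) hv.1).ne'

lemma IsCut.ne_last {v : Fin (n + 1)} (hv : IsCut π v) : v ≠ Fin.last n := by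
  rintro rfl
  exact lt_irrefl _ hv.1

lemma IsCut.lt_of_symm_lt {v w : Fin (n + 1)} (hv : IsCut π v) (hw : IsCut π w)
    (h : π.symm v < π.symm w) : w < v :=
  hw.2 v hv.1 h

lemma IsCut.symm_lt_of_lt {v w : Fin (n + 1)} (hv : IsCut π v) (hw : IsCut π w)
    (h : w < v) : π.symm v < π.symm w := by
  rcases lt_trichotomy (π.symm v) (π.symm w) with hvw | hvw | hvw
  · exact hvw
  · exact absurd (π.symm.injective hvw ▸ h) (lt_irrefl w)
  · exact absurd (hw.lt_of_symm_lt hv hvw) (not_lt.mpr h.le)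

lemma isStart_iff_of_symm_ne_zero {v : Fin (n + 1)} (hv : π.symm v ≠ 0) :
    IsStart π v ↔ IsCut π v := by
  simp [IsStart, hv]

lemma isCut_nextLetter_last (h : π.symm (Fin.last n) ≠ Fin.last n) :
    IsCut π (nextLetter π (Fin.last n)) := by
  have hpos := val_symm_nextLetter h
  refine ⟨?_, fun u hu hlt => ?_⟩
  · rw [Fin.lt_def, hpos]; omega
  · rw [Fin.lt_def, hpos] at hlt
    rw [Fin.lt_def] at hu
    omega

lemma isStart_nextLetter_last : IsStart π (nextLetter π (Fin.last n)) := by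
  by_cases h : π.symm (Fin.last n) = Fin.last n
  · left
    rw [nextLetter_of_symm_eq_last h, Equiv.symm_apply_apply]
  · exact Or.inr (isCut_nextLetter_last h)

lemma not_isStart_nextLetter_of_symm_lt {x : Fin (n + 1)}
    (hx : π.symm x < π.symm (Fin.last n)) : ¬ IsStart π (nextLetter π x) := by
  have hpos := val_symm_nextLetter (hx.trans_le (Fin.le_last _)).ne
  rw [Fin.lt_def] at hx
  rintro (h | h)
  · rw [Fin.ext_iff, hpos, Fin.val_zero] at h
    omega
  · have := h.1
    rw [Fin.lt_def, hpos] at this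
    omega

lemma symm_ne_last_of_not_isStart_nextLetter {x : Fin (n + 1)}
    (hx : ¬ IsStart π (nextLetter π x)) : π.symm x ≠ Fin.last n := fun h =>
  hx (Or.inl (by rw [nextLetter_of_symm_eq_last h, Equiv.symm_apply_apply]))

/-- The smallest letter between `n` and `v` is a cut. -/
lemma exists_isCut_le {v : Fin (n + 1)} (hv : π.symm (Fin.last n) < π.symm v) :
    ∃ w, IsCut π w ∧ π.symm w ≤ π.symm v ∧ w ≤ v := by
  set S := Finset.univ.filter fun u => π.symm (Fin.last n) < π.symm u ∧ π.symm u ≤ π.symm v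
  have hvS : v ∈ S := by simp [S, hv]
  have hmin : S.min' ⟨v, hvS⟩ ∈ S := S.min'_mem _
  simp only [S, Finset.mem_filter, Finset.mem_univ, true_and] at hmin
  refine ⟨S.min' ⟨v, hvS⟩, ⟨hmin.1, fun u hu hlt => ?_⟩, hmin.2, S.min'_le v hvS⟩
  refine lt_of_le_of_ne (S.min'_le u (by simp [S, hu, (hlt.trans_le hmin.2).le])) ?_
  rintro rfl
  exact lt_irrefl _ hlt

lemma IsCut.lt_symm_nextLetter {v : Fin (n + 1)} (hv : IsCut π v) :
    v < (nextLetter π).symm v := by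
  have hpos := val_symm_nextLetter_symm hv.symm_ne_zero
  have htop := hv.1
  rw [Fin.lt_def] at htop
  by_cases hprev : (nextLetter π).symm v = Fin.last n
  · rw [hprev]
    exact Fin.lt_last_iff_ne_last.mpr hv.ne_last
  · refine hv.2 _ ?_ ?_
    · have : π.symm ((nextLetter π).symm v) ≠ π.symm (Fin.last n) :=
        fun h => hprev (π.symm.injective h)
      rw [ne_eq, Fin.ext_iff, hpos] at this
      rw [Fin.lt_def, hpos]
      omega
    · rw [Fin.lt_def, hpos]
      omega

lemma blockStart_spec (x : Fin (n + 1)) :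
    IsStart π (blockStart π x) ∧ π.symm (blockStart π x) ≤ π.symm x ∧
      ∀ u, IsStart π u → π.symm u ≤ π.symm x →
        π.symm u ≤ π.symm (blockStart π x) := by
  set S := Finset.univ.filter fun j => j ≤ π.symm x ∧ IsStart π (π j)
  have hmem : S.max' ⟨0, by simp [S, IsStart]⟩ ∈ S := S.max'_mem _
  simp only [S, Finset.mem_filter, Finset.mem_univ, true_and] at hmem
  refine ⟨hmem.2, by simpa [blockStart] using hmem.1, fun u hu hux => ?_⟩
  simpa [blockStart] using S.le_max' (π.symm u) (by simp [S, hux, hu])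

lemma blockStart_eq_of {x s : Fin (n + 1)} (hs : IsStart π s) (hsx : π.symm s ≤ π.symm x)
    (hmax : ∀ u, IsStart π u → π.symm u ≤ π.symm x → π.symm u ≤ π.symm s) :
    blockStart π x = s := by
  obtain ⟨hstart, hle, hgreatest⟩ := blockStart_spec (π := π) x
  exact π.symm.injective (le_antisymm (hmax _ hstart hle) (hgreatest s hs hsx))

lemma blockStart_of_isStart {x : Fin (n + 1)} (hx : IsStart π x) : blockStart π x = x :=
  blockStart_eq_of hx le_rfl fun _ _ h => h

lemma symm_blockStart_eq_zero_iff {x : Fin (n + 1)} :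
    π.symm (blockStart π x) = 0 ↔ π.symm x ≤ π.symm (Fin.last n) := by
  obtain ⟨hstart, hle, hgreatest⟩ := blockStart_spec (π := π) x
  constructor
  · intro h
    by_contra hx
    rw [not_le] at hx
    have hlast : π.symm (Fin.last n) ≠ Fin.last n := (hx.trans_le (Fin.le_last _)).ne
    have hpos := val_symm_nextLetter hlast
    have := hgreatest _ (Or.inr (isCut_nextLetter_last hlast)) (by
      rw [Fin.le_def, hpos]; rw [Fin.lt_def] at hx; omega)
    rw [h, Fin.le_def, hpos, Fin.val_zero] at this
    omega
  · intro hx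
    rcases hstart with h | h
    · exact h
    · exact absurd (h.1.trans_le (hle.trans hx)) (lt_irrefl _)

lemma blockStart_last : blockStart π (Fin.last n) = π 0 :=
  (Equiv.symm_apply_eq π).mp (symm_blockStart_eq_zero_iff.mpr le_rfl)

lemma isCut_blockStart {x : Fin (n + 1)} (hx : π.symm (Fin.last n) < π.symm x) :
    IsCut π (blockStart π x) := by
  have h0 : π.symm (blockStart π x) ≠ 0 := fun h =>
    absurd (symm_blockStart_eq_zero_iff.mp h) (not_le.mpr hx)
  exact (isStart_iff_of_symm_ne_zero h0).mp (blockStart_spec x).1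

lemma blockStart_le {x : Fin (n + 1)} (hx : π.symm (Fin.last n) < π.symm x) :
    blockStart π x ≤ x := by
  obtain ⟨w, hw, hwx, hwle⟩ := exists_isCut_le hx
  rcases (blockStart_spec x).2.2 w (Or.inr hw) hwx |>.eq_or_lt with h | h
  · rw [← π.symm.injective h]
    exact hwle
  · exact (hw.lt_of_symm_lt (isCut_blockStart hx) h).le.trans hwle

lemma symm_lt_symm_blockStart {x y : Fin (n + 1)} (hx : IsStart π (nextLetter π x))
    (hxy : π.symm x < π.symm y) : π.symm x < π.symm (blockStart π y) := by
  have hpos := val_symm_nextLetter (hxy.trans_le (Fin.le_last _)).ne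
  rw [Fin.lt_def] at hxy
  have := (blockStart_spec y).2.2 _ hx (by rw [Fin.le_def, hpos]; omega)
  rw [Fin.le_def, hpos] at this
  rw [Fin.lt_def]
  omega

end Blocks

section BlockCycles

variable (π : Perm (Fin (n + 1)))

def blockCyclesFun (x : Fin (n + 1)) : Fin (n + 1) :=
  if IsStart π (nextLetter π x) then blockStart π x else nextLetter π x

variable {π}

lemma blockCyclesFun_injective : Function.Injective (blockCyclesFun π) := by
  intro x y h
  unfold blockCyclesFun at h
  split_ifs at h with hx hy hy
  · rcases lt_trichotomy (π.symm x) (π.symm y) with hxy | hxy | hxy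
    · have := symm_lt_symm_blockStart hx hxy
      rw [← h] at this
      exact absurd (blockStart_spec x).2.1 (not_le.mpr this)
    · exact π.symm.injective hxy
    · have := symm_lt_symm_blockStart hy hxy
      rw [h] at this
      exact absurd (blockStart_spec y).2.1 (not_le.mpr this)
  · exact absurd (h ▸ (blockStart_spec x).1) hy
  · exact absurd (h ▸ (blockStart_spec y).1) hx
  · exact (nextLetter π).injective h

variable (π) in
noncomputable def blockCycles : Perm (Fin (n + 1)) :=
  Equiv.ofBijective (blockCyclesFun π) (Finite.injective_iff_bijective.mp blockCyclesFun_injective)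

lemma blockCycles_of_isStart {x : Fin (n + 1)} (hx : IsStart π (nextLetter π x)) :
    blockCycles π x = blockStart π x :=
  if_pos hx

lemma blockCycles_of_not_isStart {x : Fin (n + 1)} (hx : ¬ IsStart π (nextLetter π x)) :
    blockCycles π x = nextLetter π x :=
  if_neg hx

lemma isStart_blockCycles_iff {x : Fin (n + 1)} :
    IsStart π (blockCycles π x) ↔ IsStart π (nextLetter π x) := by
  by_cases hx : IsStart π (nextLetter π x)
  · simp only [hx, iff_true, blockCycles_of_isStart hx]
    exact (blockStart_spec x).1
  · rw [blockCycles_of_not_isStart hx]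

lemma blockCycles_last : blockCycles π (Fin.last n) = π 0 := by
  rw [blockCycles_of_isStart isStart_nextLetter_last, blockStart_last]

lemma blockCycles_eq_nextLetter_or {x : Fin (n + 1)} (hx : x ≠ Fin.last n) :
    blockCycles π x = nextLetter π x ∨
      (IsCut π (blockCycles π x) ∧ blockCycles π x ≤ x) := by
  by_cases hstart : IsStart π (nextLetter π x)
  · right
    have hpost : π.symm (Fin.last n) < π.symm x := by
      refine lt_of_le_of_ne (not_lt.mp fun hlt => ?_) fun h => hx (π.symm.injective h).symm
      exact not_isStart_nextLetter_of_symm_lt hlt hstart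
    rw [blockCycles_of_isStart hstart]
    exact ⟨isCut_blockStart hpost, blockStart_le hpost⟩
  · exact Or.inl (blockCycles_of_not_isStart hstart)

end BlockCycles

section Shift

variable (π : Perm (Fin (n + 1)))

noncomputable def shiftCycles : Perm (Fin (n + 1)) :=
  (Equiv.subRight 1).trans (blockCycles π)

variable {π}

lemma shiftCycles_symm_apply (v : Fin (n + 1)) :
    (shiftCycles π).symm v = (blockCycles π).symm v + 1 := by
  simp [shiftCycles]

lemma shiftCycles_symm_eq_zero_iff {v : Fin (n + 1)} :
    (shiftCycles π).symm v = 0 ↔ π.symm v = 0 := by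
  rw [shiftCycles_symm_apply, add_eq_zero_iff_eq_neg, ← Fin.neg_last, neg_neg,
    Equiv.symm_apply_eq, blockCycles_last, Equiv.symm_apply_eq]

lemma val_shiftCycles_symm_eq_or {v : Fin (n + 1)} (hv : π.symm v ≠ 0) :
    ((shiftCycles π).symm v : ℕ) = (nextLetter π).symm v + 1 ∨
      ((v : ℕ) < (nextLetter π).symm v ∧ (v : ℕ) < (shiftCycles π).symm v) := by
  set x := (blockCycles π).symm v
  have hxv : blockCycles π x = v := (blockCycles π).apply_symm_apply v
  have hx : x ≠ Fin.last n := by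
    rintro hx
    rw [hx, blockCycles_last] at hxv
    exact hv (by rw [← hxv, Equiv.symm_apply_apply])
  have hval : ((shiftCycles π).symm v : ℕ) = x + 1 := by
    rw [shiftCycles_symm_apply, Fin.val_add_one_of_lt (Fin.lt_last_iff_ne_last.mpr hx)]
  rcases blockCycles_eq_nextLetter_or hx with h | ⟨hcut, hle⟩
  · left
    rw [hval, ← hxv, h, Equiv.symm_apply_apply]
  · right
    rw [hxv] at hcut hle
    rw [hval, ← Fin.lt_def, Nat.lt_succ_iff, ← Fin.le_def]
    exact ⟨hcut.lt_symm_nextLetter, hle⟩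

lemma image_oneLine_filter_position_shiftCycles (P Q : ℕ → ℕ → Prop)
    [DecidableRel P] [DecidableRel Q]
    (hPQ : ∀ v : Fin (n + 1), π.symm v ≠ 0 →
      (Q ((shiftCycles π).symm v + 1) (v + 1) ↔ P ((nextLetter π).symm v + 1) (v + 1))) :
    ((Finset.Icc 2 (n + 1)).filter fun i => Q i (oneLine (shiftCycles π) i)).image
        (oneLine (shiftCycles π)) =
      ((Finset.Icc 1 (n + 1 - 1)).filter fun i => P (oneLine π i) (oneLine π (i + 1))).image
        (fun i => oneLine π (i + 1)) := by
  rw [image_oneLine_filter_position, image_oneLine_filter_consecutive]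
  congr 1
  ext v
  simp only [Finset.mem_filter, Finset.mem_univ, true_and, ne_eq, shiftCycles_symm_eq_zero_iff]
  exact and_congr_right (hPQ v)

variable (π) in
theorem stats_shiftCycles :
    ExcHat (shiftCycles π) = Asc2 π ∧ Aexc (shiftCycles π) = DesSet π ∧
      FixHat (shiftCycles π) = SucSet π := by
  refine ⟨image_oneLine_filter_position_shiftCycles (fun a b => a + 2 ≤ b) (· < ·) ?_,
    image_oneLine_filter_position_shiftCycles (fun a b => b < a) (fun i b => b < i) ?_,
    image_oneLine_filter_position_shiftCycles (fun a b => b = a + 1) (fun i b => b = i) ?_⟩ <;>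
  · intro v hv
    have hne := symm_nextLetter_ne_self hv
    rw [Ne, Fin.ext_iff] at hne
    rcases val_shiftCycles_symm_eq_or hv with h | h <;> omega

end Shift

section Cycles

variable {π : Perm (Fin (n + 1))}

lemma blockStart_blockCycles (x : Fin (n + 1)) :
    blockStart π (blockCycles π x) = blockStart π x := by
  by_cases hx : IsStart π (nextLetter π x)
  · rw [blockCycles_of_isStart hx, blockStart_of_isStart (blockStart_spec x).1]
  · rw [blockCycles_of_not_isStart hx]
    have hpos := val_symm_nextLetter (symm_ne_last_of_not_isStart_nextLetter hx)
    obtain ⟨hstart, hle, hgreatest⟩ := blockStart_spec (π := π) x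
    refine blockStart_eq_of hstart (hle.trans ?_) fun u hu hux => hgreatest u hu ?_
    · rw [Fin.le_def, hpos]
      omega
    · rcases hux.eq_or_lt with h | h
      · exact absurd (π.symm.injective h ▸ hu) hx
      · rw [Fin.lt_def, hpos] at h
        rw [Fin.le_def]
        omega

lemma sameCycle_blockStart (x : Fin (n + 1)) : (blockCycles π).SameCycle x (blockStart π x) := by
  induction h : n - (π.symm x : ℕ) using Nat.strong_induction_on generalizing x with
  | _ k ih =>
    by_cases hx : IsStart π (nextLetter π x)
    · rw [← blockCycles_of_isStart hx]
      exact Perm.sameCycle_apply_right.mpr (Perm.SameCycle.refl _ _)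
    · have hlast := symm_ne_last_of_not_isStart_nextLetter hx
      have hpos := val_symm_nextLetter hlast
      have hlt : (π.symm x : ℕ) < n := Fin.lt_last_iff_ne_last.mpr hlast
      have := ih _ (by rw [← h, blockCycles_of_not_isStart hx, hpos]; omega)
        (blockCycles π x) rfl
      rwa [blockStart_blockCycles, Perm.sameCycle_apply_left] at this

lemma sameCycle_blockCycles_iff {x y : Fin (n + 1)} :
    (blockCycles π).SameCycle x y ↔ blockStart π x = blockStart π y :=
  ⟨Perm.SameCycle.eq_of_apply_eq blockStart_blockCycles, fun h =>
    (sameCycle_blockStart x).trans (h ▸ (sameCycle_blockStart y).symm)⟩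

lemma isCut_iff_sameCycle {v : Fin (n + 1)} :
    IsCut π v ↔ ¬ (blockCycles π).SameCycle (Fin.last n) v ∧
      ∀ u, (blockCycles π).SameCycle v u → v ≤ u := by
  simp only [sameCycle_blockCycles_iff, blockStart_last]
  constructor
  · intro hv
    rw [blockStart_of_isStart (Or.inr hv)]
    refine ⟨fun h => hv.symm_ne_zero (by rw [← h, Equiv.symm_apply_apply]), fun u hu => ?_⟩
    have hpost : π.symm (Fin.last n) < π.symm u := by
      by_contra hle
      rw [not_lt, ← symm_blockStart_eq_zero_iff, ← hu] at hle
      exact hv.symm_ne_zero hle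
    exact hu ▸ blockStart_le hpost
  · rintro ⟨htop, hmin⟩
    have hpost : π.symm (Fin.last n) < π.symm v := by
      by_contra hle
      rw [not_lt, ← symm_blockStart_eq_zero_iff, Equiv.symm_apply_eq] at hle
      exact htop hle.symm
    have hv : blockStart π v = v :=
      le_antisymm (blockStart_le hpost) (hmin _ (blockStart_of_isStart (blockStart_spec v).1).symm)
    exact hv ▸ isCut_blockStart hpost

end Cycles

section Recovery

def cycleMinima (ρ : Perm (Fin (n + 1))) : Finset (Fin (n + 1)) :=
  Finset.univ.filter fun v => ¬ ρ.SameCycle (Fin.last n) v ∧ ∀ u, ρ.SameCycle v u → v ≤ u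

/-- The successor of `x` in the word, read off from `ρ = blockCycles π`: the blocks start at
`ρ n` and then at the minima of the other cycles in decreasing order. -/
def cyclesNextLetter (ρ : Perm (Fin (n + 1))) (x : Fin (n + 1)) : Fin (n + 1) :=
  if ρ x = ρ (Fin.last n) ∨ ρ x ∈ cycleMinima ρ then
    if h : ((cycleMinima ρ).filter fun c => ρ x = ρ (Fin.last n) ∨ c < ρ x).Nonempty then
      ((cycleMinima ρ).filter fun c => ρ x = ρ (Fin.last n) ∨ c < ρ x).max' h
    else ρ (Fin.last n)
  else ρ x

variable {π : Perm (Fin (n + 1))}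

lemma mem_cycleMinima_blockCycles {v : Fin (n + 1)} :
    v ∈ cycleMinima (blockCycles π) ↔ IsCut π v := by
  simp [cycleMinima, isCut_iff_sameCycle]

lemma isStart_iff_blockCycles {v : Fin (n + 1)} :
    IsStart π v ↔ v = blockCycles π (Fin.last n) ∨ v ∈ cycleMinima (blockCycles π) := by
  rw [mem_cycleMinima_blockCycles, blockCycles_last, IsStart, Equiv.symm_apply_eq]

lemma isCut_and_blockStart_iff {c x : Fin (n + 1)} :
    IsCut π c ∧ (blockStart π x = π 0 ∨ c < blockStart π x) ↔
      IsCut π c ∧ π.symm x < π.symm c := by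
  refine and_congr_right fun hc => ?_
  obtain ⟨hstart, hle, hgreatest⟩ := blockStart_spec (π := π) x
  by_cases h0 : blockStart π x = π 0
  · simp only [h0, true_or, true_iff]
    exact (symm_blockStart_eq_zero_iff.mp ((Equiv.symm_apply_eq π).mpr h0)).trans_lt hc.1
  · have hs : IsCut π (blockStart π x) :=
      (isStart_iff_of_symm_ne_zero fun h => h0 ((Equiv.symm_apply_eq π).mp h)).mp hstart
    simp only [h0, false_or]
    refine ⟨fun hlt => ?_, fun hxc => hs.lt_of_symm_lt hc (hle.trans_lt hxc)⟩
    by_contra hcx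
    exact absurd (hgreatest c (Or.inr hc) (not_lt.mp hcx)) (not_le.mpr (hs.symm_lt_of_lt hc hlt))

lemma nextLetter_eq_of_isStart {x : Fin (n + 1)} (hx : IsStart π (nextLetter π x)) :
    nextLetter π x =
      if h : (Finset.univ.filter fun c => IsCut π c ∧ π.symm x < π.symm c).Nonempty then
        (Finset.univ.filter fun c => IsCut π c ∧ π.symm x < π.symm c).max' h
      else π 0 := by
  by_cases hlast : π.symm x = Fin.last n
  · rw [dif_neg, nextLetter_of_symm_eq_last hlast]
    rintro ⟨c, hc⟩
    simp only [Finset.mem_filter, Finset.mem_univ, true_and, hlast] at hc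
    exact absurd (Fin.le_last _) (not_le.mpr hc.2)
  · have hpos := val_symm_nextLetter hlast
    have hcut : IsCut π (nextLetter π x) :=
      (isStart_iff_of_symm_ne_zero (by rw [Ne, Fin.ext_iff, hpos, Fin.val_zero]; omega)).mp hx
    have hmem :
        nextLetter π x ∈ Finset.univ.filter fun c => IsCut π c ∧ π.symm x < π.symm c := by
      simp only [Finset.mem_filter, Finset.mem_univ, true_and, hcut, Fin.lt_def, hpos]
      omega
    rw [dif_pos ⟨_, hmem⟩]
    refine le_antisymm (Finset.le_max' _ _ hmem) (Finset.max'_le _ _ _ fun c hc => ?_)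
    simp only [Finset.mem_filter, Finset.mem_univ, true_and] at hc
    rcases eq_or_lt_of_le (show π.symm (nextLetter π x) ≤ π.symm c by
      rw [Fin.le_def, hpos]; exact hc.2) with h | h
    · exact (π.symm.injective h).ge
    · exact (hcut.lt_of_symm_lt hc.1 h).le

lemma nextLetter_eq_cyclesNextLetter (x : Fin (n + 1)) :
    nextLetter π x = cyclesNextLetter (blockCycles π) x := by
  by_cases hx : IsStart π (nextLetter π x)
  · have hstart := isStart_iff_blockCycles.mp (isStart_blockCycles_iff.mpr hx)
    have hset : ((cycleMinima (blockCycles π)).filter fun c =>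
        blockCycles π x = blockCycles π (Fin.last n) ∨ c < blockCycles π x) =
        Finset.univ.filter fun c => IsCut π c ∧ π.symm x < π.symm c := by
      ext c
      simp only [Finset.mem_filter, Finset.mem_univ, true_and, mem_cycleMinima_blockCycles,
        blockCycles_last, blockCycles_of_isStart hx, isCut_and_blockStart_iff]
    rw [cyclesNextLetter, if_pos hstart, nextLetter_eq_of_isStart hx]
    simp only [hset]
    simp only [blockCycles_last]
  · have hstart := (isStart_iff_blockCycles.not.mp (isStart_blockCycles_iff.not.mpr hx))
    rw [cyclesNextLetter, if_neg hstart, blockCycles_of_not_isStart hx]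

lemma eq_of_nextLetter_eq {π π' : Perm (Fin (n + 1))} (h : nextLetter π = nextLetter π')
    (h0 : π 0 = π' 0) : π = π' := by
  have hstep (σ : Perm (Fin (n + 1))) (i : Fin n) : σ i.succ = nextLetter σ (σ i.castSucc) := by
    rw [nextLetter_apply, Equiv.symm_apply_apply, Fin.coeSucc_eq_succ]
  ext1 i
  induction i using Fin.induction with
  | zero => exact h0
  | succ i ih => rw [hstep, hstep π', ih, h]

theorem shiftCycles_injective : Function.Injective (shiftCycles (n := n)) := by
  intro π π' h
  have hcycles : blockCycles π = blockCycles π' := by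
    ext1 x
    simpa [shiftCycles] using congrArg (fun σ : Perm (Fin (n + 1)) => σ (x + 1)) h
  refine eq_of_nextLetter_eq (Equiv.ext fun x => ?_) ?_
  · rw [nextLetter_eq_cyclesNextLetter, nextLetter_eq_cyclesNextLetter, hcycles]
  · rw [← blockCycles_last, ← blockCycles_last, hcycles]

end Recovery

end PermWord

theorem stmt1_general (n : ℕ) (S₁ S₂ S₃ : Finset ℕ) :
    (Finset.univ.filter (fun π : Equiv.Perm (Fin n) =>
        Asc2 π = S₁ ∧ DesSet π = S₂ ∧ SucSet π = S₃)).card =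
      (Finset.univ.filter (fun π : Equiv.Perm (Fin n) =>
        ExcHat π = S₁ ∧ Aexc π = S₂ ∧ FixHat π = S₃)).card := by
  rcases n with _ | n
  · simp [Asc2, DesSet, SucSet, ExcHat, Aexc, FixHat]
  · refine Finset.card_equiv (Equiv.ofBijective _
      (Finite.injective_iff_bijective.mp PermWord.shiftCycles_injective)) fun π => ?_
    obtain ⟨hExc, hAexc, hFix⟩ := PermWord.stats_shiftCycles π
    simp [hExc, hAexc, hFix]

/-- the triple set-valued statistics (Asc₂, Des, Suc) and
(Êxc, Aexc, F̂ix) are equidistributed over 𝔖ₙ. -/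
theorem stmt1 (n : ℕ) (hn : 0 < n) (S₁ S₂ S₃ : Finset ℕ)
    (h₁ : S₁ ⊆ Finset.Icc 1 n) (h₂ : S₂ ⊆ Finset.Icc 1 n) (h₃ : S₃ ⊆ Finset.Icc 1 n) :
    (Finset.univ.filter (fun π : Equiv.Perm (Fin n) =>
        Asc2 π = S₁ ∧ DesSet π = S₂ ∧ SucSet π = S₃)).card =
      (Finset.univ.filter (fun π : Equiv.Perm (Fin n) =>
        ExcHat π = S₁ ∧ Aexc π = S₂ ∧ FixHat π = S₃)).card :=
  stmt1_general n S₁ S₂ S₃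
end

section
/- For every positive integer n, the identity ∑_{π ∈ 𝔖_n} x^{asc₂(π)} y^{des(π)} s^{suc(π)} = ∑_{π ∈ 𝔖_n} x^{êxc(π)} y^{aexc(π)} s^{f̂ix(π)} holds as an identity of polynomials in the three variables x, y, s (over the integers). -/
open Finset

namespace StmtBij


variable {n : ℕ}

/-- largest index `q < n` with `x < π q` (0 if none). -/
def Kn (π : Equiv.Perm (Fin n)) (x : ℕ) : ℕ :=
  Nat.findGreatest (fun q => ∃ h : q < n, x < (π ⟨q, h⟩ : ℕ)) (n - 1)

/-- largest value `π q` over indices `q > j` (0 if none). -/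
def Mn (π : Equiv.Perm (Fin n)) (j : ℕ) : ℕ :=
  Nat.findGreatest (fun v => ∃ q : Fin n, j < (q : ℕ) ∧ (π q : ℕ) = v) (n - 1)

noncomputable def Jn (π : Equiv.Perm (Fin n)) (x : ℕ) : ℕ :=
  if hx : x < n then min ((π.symm ⟨x, hx⟩ : ℕ)) (Kn π x) else 0

def Gn (π : Equiv.Perm (Fin n)) (j : ℕ) : ℕ :=
  if hj : j < n then min ((π ⟨j, hj⟩ : ℕ)) (Mn π j) else 0

lemma apply_val_congr (π : Equiv.Perm (Fin n)) {a b : ℕ} (hab : a = b) (ha : a < n)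
    (hb : b < n) : (π ⟨a, ha⟩ : ℕ) = (π ⟨b, hb⟩ : ℕ) := by subst hab; rfl

lemma apply_ne (π : Equiv.Perm (Fin n)) {a b : ℕ} (h : a ≠ b) (ha : a < n) (hb : b < n) :
    (π ⟨a, ha⟩ : ℕ) ≠ (π ⟨b, hb⟩ : ℕ) := by
  intro hv
  have h2 : (⟨a, ha⟩ : Fin n) = ⟨b, hb⟩ := π.injective (Fin.ext hv)
  exact h (by simpa using h2)

lemma symm_val (π : Equiv.Perm (Fin n)) {x : ℕ} (hx : x < n)
    (h : ((π.symm ⟨x, hx⟩ : Fin n) : ℕ) < n) :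
    (π ⟨((π.symm ⟨x, hx⟩ : Fin n) : ℕ), h⟩ : ℕ) = x := by
  have h2 : (⟨((π.symm ⟨x, hx⟩ : Fin n) : ℕ), h⟩ : Fin n) = π.symm ⟨x, hx⟩ := rfl
  rw [h2, Equiv.apply_symm_apply]

lemma Kn_le (π : Equiv.Perm (Fin n)) (x : ℕ) : Kn π x ≤ n - 1 := Nat.findGreatest_le _

lemma Kn_spec (π : Equiv.Perm (Fin n)) {x : ℕ} (hx : x + 1 < n) (h : Kn π x < n) :
    x < (π ⟨Kn π x, h⟩ : ℕ) := by
  have hn1 : n - 1 < n := by omega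
  have hval : (π ⟨((π.symm ⟨n-1, hn1⟩ : Fin n) : ℕ), (π.symm ⟨n-1, hn1⟩).isLt⟩ : ℕ) = n - 1 :=
    symm_val π hn1 _
  have hP : ∃ hh : ((π.symm ⟨n-1, hn1⟩ : Fin n) : ℕ) < n,
      x < (π ⟨((π.symm ⟨n-1, hn1⟩ : Fin n) : ℕ), hh⟩ : ℕ) :=
    ⟨(π.symm ⟨n-1, hn1⟩).isLt, by omega⟩
  have hspec := Nat.findGreatest_spec
    (P := fun q => ∃ h : q < n, x < (π ⟨q, h⟩ : ℕ)) (n := n - 1)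
    (by have := (π.symm ⟨n-1, hn1⟩).isLt; omega) hP
  obtain ⟨hh, hlt⟩ := hspec
  exact hlt

lemma Kn_max (π : Equiv.Perm (Fin n)) {x q : ℕ} (hq : q < n) (hgt : Kn π x < q) :
    (π ⟨q, hq⟩ : ℕ) ≤ x := by
  by_contra hcon
  push_neg at hcon
  exact Nat.findGreatest_is_greatest (P := fun q => ∃ h : q < n, x < (π ⟨q, h⟩ : ℕ))
    hgt (by omega) ⟨hq, hcon⟩

lemma Kn_ge (π : Equiv.Perm (Fin n)) {x q : ℕ} (hq : q < n) (hval : x < (π ⟨q, hq⟩ : ℕ)) :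
    q ≤ Kn π x :=
  Nat.le_findGreatest (by omega) ⟨hq, hval⟩

lemma Mn_le (π : Equiv.Perm (Fin n)) (j : ℕ) : Mn π j ≤ n - 1 := Nat.findGreatest_le _

lemma Mn_spec (π : Equiv.Perm (Fin n)) {j : ℕ} (hj : j + 1 < n) :
    ∃ q : Fin n, j < (q : ℕ) ∧ (π q : ℕ) = Mn π j := by
  refine Nat.findGreatest_spec
    (P := fun v => ∃ q : Fin n, j < (q : ℕ) ∧ (π q : ℕ) = v) (n := n - 1)
    (m := (π ⟨j+1, hj⟩ : ℕ)) ?_ ⟨⟨j+1, hj⟩, Nat.lt_succ_self j, rfl⟩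
  have := (π ⟨j+1, hj⟩).isLt; omega

lemma Mn_max (π : Equiv.Perm (Fin n)) {j : ℕ} {q : Fin n} (hjq : j < (q : ℕ)) :
    (π q : ℕ) ≤ Mn π j := by
  by_contra hcon
  push_neg at hcon
  refine Nat.findGreatest_is_greatest
    (P := fun v => ∃ q : Fin n, j < (q : ℕ) ∧ (π q : ℕ) = v) (k := (π q : ℕ)) (n := n - 1)
    hcon (by have := (π q).isLt; omega) ⟨q, hjq, rfl⟩



lemma pos_ne_Kn (π : Equiv.Perm (Fin n)) {x : ℕ} (hx : x + 1 < n) :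
    ((π.symm ⟨x, by omega⟩ : Fin n) : ℕ) ≠ Kn π x := by
  intro he
  have hK : Kn π x < n := he ▸ (π.symm ⟨x, by omega⟩).isLt
  have h1 : (π ⟨((π.symm ⟨x, by omega⟩ : Fin n) : ℕ), by omega⟩ : ℕ) = x :=
    symm_val π (by omega) _
  have h2 : x < (π ⟨Kn π x, hK⟩ : ℕ) := Kn_spec π hx hK
  rw [apply_val_congr π he _ hK] at h1
  omega

lemma Jn_eq (π : Equiv.Perm (Fin n)) {x : ℕ} (hx : x < n) :
    Jn π x = min ((π.symm ⟨x, hx⟩ : ℕ)) (Kn π x) := dif_pos hx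

lemma Gn_eq (π : Equiv.Perm (Fin n)) {j : ℕ} (hj : j < n) :
    Gn π j = min ((π ⟨j, hj⟩ : ℕ)) (Mn π j) := dif_pos hj

lemma Jn_succ_lt (π : Equiv.Perm (Fin n)) {x : ℕ} (hx : x + 1 < n) : Jn π x + 1 < n := by
  have hxn : x < n := by omega
  have hp := (π.symm ⟨x, hxn⟩).isLt
  have hK := Kn_le π x
  have hne := pos_ne_Kn π hx
  rw [Jn_eq π hxn]
  omega

lemma key (π : Equiv.Perm (Fin n)) {x : ℕ} (hx : x + 1 < n) (h1 : Jn π x + 1 < n)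
    (h0 : Jn π x < n) :
    ((π ⟨Jn π x + 1, h1⟩ : ℕ) ≤ x ↔ (π ⟨Jn π x + 1, h1⟩ : ℕ) < (π ⟨Jn π x, h0⟩ : ℕ)) ∧
    ((π ⟨Jn π x + 1, h1⟩ : ℕ) = x + 1 ↔ (π ⟨Jn π x + 1, h1⟩ : ℕ) = (π ⟨Jn π x, h0⟩ : ℕ) + 1) ∧
    ((π ⟨Jn π x + 1, h1⟩ : ℕ) ≠ (π ⟨Jn π x, h0⟩ : ℕ)) := by
  have hxn : x < n := by omega
  have hne := pos_ne_Kn π hx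
  have hJ := Jn_eq π hxn
  have hbne : (π ⟨Jn π x + 1, h1⟩ : ℕ) ≠ (π ⟨Jn π x, h0⟩ : ℕ) :=
    apply_ne π (by omega) h1 h0
  rcases lt_or_gt_of_ne hne with hc | hc
  · -- Jn = pos, π ⟨Jn⟩ = x
    have hJp : Jn π x = ((π.symm ⟨x, hxn⟩ : Fin n) : ℕ) := by omega
    have hπp : (π ⟨Jn π x, h0⟩ : ℕ) = x := by
      rw [apply_val_congr π hJp h0 (by omega)]
      exact symm_val π hxn _
    rw [hπp]
    rw [hπp] at hbne
    exact ⟨by omega, Iff.rfl, by omega⟩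
  · -- Jn = Kn
    have hJK : Jn π x = Kn π x := by omega
    have hgt : x < (π ⟨Jn π x, h0⟩ : ℕ) := by
      rw [apply_val_congr π hJK h0 (by omega)]
      exact Kn_spec π hx _
    have hle : (π ⟨Jn π x + 1, h1⟩ : ℕ) ≤ x := Kn_max π h1 (by omega)
    exact ⟨by omega, by omega, hbne⟩

lemma Gn_Jn (π : Equiv.Perm (Fin n)) {x : ℕ} (hx : x + 1 < n) : Gn π (Jn π x) = x := by
  have hxn : x < n := by omega
  have h1 := Jn_succ_lt π hx
  have h0 : Jn π x < n := by omega
  have hne := pos_ne_Kn π hx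
  have hJ := Jn_eq π hxn
  rw [Gn_eq π h0]
  rcases lt_or_gt_of_ne hne with hc | hc
  · -- Jn = pos
    have hJp : Jn π x = ((π.symm ⟨x, hxn⟩ : Fin n) : ℕ) := by omega
    have hπp : (π ⟨Jn π x, h0⟩ : ℕ) = x := by
      rw [apply_val_congr π hJp h0 (by omega)]
      exact symm_val π hxn _
    have hKn : Kn π x < n := by have := Kn_le π x; omega
    have hM : x < Mn π (Jn π x) := by
      have hMK : (π ⟨Kn π x, hKn⟩ : ℕ) ≤ Mn π (Jn π x) :=
        Mn_max π (q := ⟨Kn π x, hKn⟩) (show Jn π x < Kn π x by omega)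
      have := Kn_spec π hx hKn
      omega
    omega
  · -- Jn = Kn
    have hJK : Jn π x = Kn π x := by omega
    have hgt : x < (π ⟨Jn π x, h0⟩ : ℕ) := by
      rw [apply_val_congr π hJK h0 (by omega)]
      exact Kn_spec π hx _
    have hMle : Mn π (Jn π x) ≤ x := by
      obtain ⟨q, hq1, hq2⟩ := Mn_spec π (j := Jn π x) h1
      have : (π q : ℕ) ≤ x := by
        have : (π ⟨(q : ℕ), q.isLt⟩ : ℕ) ≤ x := Kn_max π q.isLt (by omega)
        simpa using this
      omega
    have hMge : x ≤ Mn π (Jn π x) := by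
      have hpv : (π ⟨((π.symm ⟨x, hxn⟩ : Fin n) : ℕ), (π.symm ⟨x, hxn⟩).isLt⟩ : ℕ) = x :=
        symm_val π hxn _
      have := Mn_max π (j := Jn π x) (q := π.symm ⟨x, hxn⟩) (by omega)
      have hq : π (π.symm ⟨x, hxn⟩) = ⟨x, hxn⟩ := Equiv.apply_symm_apply _ _
      rw [hq] at this
      exact this
    omega

lemma Gn_succ_lt (π : Equiv.Perm (Fin n)) {j : ℕ} (hj : j + 1 < n) : Gn π j + 1 < n := by
  have hjn : j < n := by omega
  obtain ⟨q0, hq0, hq0v⟩ := Mn_spec π hj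
  have hane : (π ⟨j, hjn⟩ : ℕ) ≠ Mn π j := by
    rw [← hq0v]
    have : (π ⟨(q0 : ℕ), q0.isLt⟩ : ℕ) = (π q0 : ℕ) := rfl
    rw [← this]
    exact apply_ne π (by omega) hjn q0.isLt
  have h1 := (π ⟨j, hjn⟩).isLt
  have h2 := Mn_le π j
  rw [Gn_eq π hjn]
  omega

lemma Jn_Gn (π : Equiv.Perm (Fin n)) {j : ℕ} (hj : j + 1 < n) : Jn π (Gn π j) = j := by
  have hjn : j < n := by omega
  obtain ⟨q0, hq0, hq0v⟩ := Mn_spec π hj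
  have hane : (π ⟨j, hjn⟩ : ℕ) ≠ Mn π j := by
    rw [← hq0v]
    exact apply_ne π (a := j) (b := (q0 : ℕ)) (by omega) hjn q0.isLt
  have hG := Gn_eq π hjn
  have hGlt := Gn_succ_lt π hj
  have hGn : Gn π j < n := by omega
  rw [Jn_eq π hGn]
  rcases lt_or_gt_of_ne hane with hc | hc
  · -- Gn = π j
    have hGa : Gn π j = (π ⟨j, hjn⟩ : ℕ) := by omega
    have hsymm : ((π.symm ⟨Gn π j, hGn⟩ : Fin n) : ℕ) = j := by
      have he : (⟨Gn π j, hGn⟩ : Fin n) = π ⟨j, hjn⟩ := Fin.ext hGa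
      rw [he, Equiv.symm_apply_apply]
    have hKge : q0 ≤ Kn π (Gn π j) := by
      refine Kn_ge π q0.isLt ?_
      have : (π ⟨(q0 : ℕ), q0.isLt⟩ : ℕ) = (π q0 : ℕ) := rfl
      rw [this, hq0v]
      omega
    rw [hsymm]
    omega
  · -- Gn = Mn
    have hGm : Gn π j = Mn π j := by omega
    have hsymm : ((π.symm ⟨Gn π j, hGn⟩ : Fin n) : ℕ) = (q0 : ℕ) := by
      have he : (⟨Gn π j, hGn⟩ : Fin n) = π q0 := Fin.ext (by rw [hq0v]; exact hGm)
      rw [he, Equiv.symm_apply_apply]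
    have hKle : Kn π (Gn π j) ≤ j := by
      by_contra hcon
      push_neg at hcon
      have hKn : Kn π (Gn π j) < n := by have := Kn_le π (Gn π j); omega
      have hs : Gn π j < (π ⟨Kn π (Gn π j), hKn⟩ : ℕ) := Kn_spec π (by omega) hKn
      have hm : (π ⟨Kn π (Gn π j), hKn⟩ : ℕ) ≤ Mn π j :=
        Mn_max π (q := ⟨Kn π (Gn π j), hKn⟩) (by exact hcon)
      omega
    have hKge : j ≤ Kn π (Gn π j) := by
      refine Kn_ge π hjn ?_
      omega
    rw [hsymm]
    omega



noncomputable def eFun (π : Equiv.Perm (Fin n)) : Fin n → Fin n := fun p =>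
  if h : (p : ℕ) = 0 then p
  else ⟨Jn π ((p : ℕ) - 1) + 1, Jn_succ_lt π (by have := p.isLt; omega)⟩

lemma eFun_succ (π : Equiv.Perm (Fin n)) {x : ℕ} (hx : x + 1 < n) (hJ : Jn π x + 1 < n) :
    eFun π ⟨x + 1, hx⟩ = ⟨Jn π x + 1, hJ⟩ := by
  unfold eFun
  rw [dif_neg (by simp)]
  exact Fin.ext (by simp)

lemma eFun_inj (π : Equiv.Perm (Fin n)) : Function.Injective (eFun π) := by
  intro p q h
  unfold eFun at h
  by_cases hp : (p : ℕ) = 0 <;> by_cases hq : (q : ℕ) = 0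
  · exact Fin.ext (by omega)
  · rw [dif_pos hp, dif_neg hq] at h
    have hval : (p : ℕ) = Jn π ((q : ℕ) - 1) + 1 := congrArg Fin.val h
    omega
  · rw [dif_neg hp, dif_pos hq] at h
    have hval : Jn π ((p : ℕ) - 1) + 1 = (q : ℕ) := congrArg Fin.val h
    omega
  · rw [dif_neg hp, dif_neg hq] at h
    have hv : Jn π ((p : ℕ) - 1) + 1 = Jn π ((q : ℕ) - 1) + 1 := congrArg Fin.val h
    have hJeq : Jn π ((p : ℕ) - 1) = Jn π ((q : ℕ) - 1) := by omega
    have hxp : ((p : ℕ) - 1) + 1 < n := by have := p.isLt; omega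
    have hxq : ((q : ℕ) - 1) + 1 < n := by have := q.isLt; omega
    have := Gn_Jn π hxp
    rw [hJeq, Gn_Jn π hxq] at this
    exact Fin.ext (by omega)

noncomputable def phiFun (π : Equiv.Perm (Fin n)) : Fin n → Fin n := fun p => π (eFun π p)

noncomputable def Phi (π : Equiv.Perm (Fin n)) : Equiv.Perm (Fin n) :=
  Equiv.ofBijective (phiFun π)
    (Finite.injective_iff_bijective.mp (π.injective.comp (eFun_inj π)))

lemma Phi_apply (π : Equiv.Perm (Fin n)) (p : Fin n) : Phi π p = π (eFun π p) := rfl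

lemma Phi_succ (π : Equiv.Perm (Fin n)) {x : ℕ} (hx : x + 1 < n) (hJ : Jn π x + 1 < n) :
    Phi π ⟨x + 1, hx⟩ = π ⟨Jn π x + 1, hJ⟩ := by
  rw [Phi_apply, eFun_succ π hx hJ]

lemma Phi_zero (π : Equiv.Perm (Fin n)) (h : 0 < n) : Phi π ⟨0, h⟩ = π ⟨0, h⟩ := by
  rw [Phi_apply, show eFun π ⟨0, h⟩ = ⟨0, h⟩ from dif_pos rfl]

lemma Mn_congr {π σ : Equiv.Perm (Fin n)} {j : ℕ} (hj : j + 1 < n)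
    (hpre : ∀ q : Fin n, (q : ℕ) ≤ j → π q = σ q) : Mn π j = Mn σ j := by
  have aux : ∀ (π σ : Equiv.Perm (Fin n)), (∀ q : Fin n, (q : ℕ) ≤ j → π q = σ q) →
      Mn π j ≤ Mn σ j := by
    intro π σ hpre
    obtain ⟨q0, hq0, hq0v⟩ := Mn_spec π hj
    set v : Fin n := π q0 with hv
    have hr : j < ((σ.symm v : Fin n) : ℕ) := by
      by_contra hcon
      push_neg at hcon
      have h1 : π (σ.symm v) = σ (σ.symm v) := hpre _ hcon
      rw [Equiv.apply_symm_apply] at h1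
      have h2 : σ.symm v = q0 := π.injective h1
      rw [h2] at hcon
      omega
    have := Mn_max σ (j := j) (q := σ.symm v) hr
    rw [Equiv.apply_symm_apply] at this
    omega
  exact le_antisymm (aux π σ hpre) (aux σ π (fun q hq => (hpre q hq).symm))

lemma Phi_inj : Function.Injective (Phi : Equiv.Perm (Fin n) → Equiv.Perm (Fin n)) := by
  intro π σ h
  have hf : ∀ p : Fin n, phiFun π p = phiFun σ p := by
    intro p
    have : Phi π p = Phi σ p := by rw [h]
    exact this
  have claim : ∀ k, ∀ hk : k < n, π ⟨k, hk⟩ = σ ⟨k, hk⟩ := by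
    intro k
    induction k using Nat.strong_induction_on with
    | _ k IH =>
      intro hk
      match k, hk with
      | 0, hk =>
        have h0 := hf ⟨0, hk⟩
        rw [show phiFun π ⟨0, hk⟩ = π ⟨0, hk⟩ from congrArg π (dif_pos rfl),
            show phiFun σ ⟨0, hk⟩ = σ ⟨0, hk⟩ from congrArg σ (dif_pos rfl)] at h0
        exact h0
      | j + 1, hk =>
        have hMn : Mn π j = Mn σ j := Mn_congr hk (fun q hq => IH (q : ℕ) (by omega) q.isLt)
        have hGn : Gn π j = Gn σ j := by
          rw [Gn_eq π (by omega : j < n), Gn_eq σ (by omega : j < n), hMn,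
            congrArg Fin.val (IH j (by omega) (by omega))]
        have hx : Gn π j + 1 < n := Gn_succ_lt π hk
        have hJπ : Jn π (Gn π j) = j := Jn_Gn π hk
        have hJσ : Jn σ (Gn π j) = j := by rw [hGn]; exact Jn_Gn σ hk
        have h1 := hf ⟨Gn π j + 1, hx⟩
        have e1 : phiFun π ⟨Gn π j + 1, hx⟩ = π ⟨j + 1, hk⟩ := by
          show π (eFun π ⟨Gn π j + 1, hx⟩) = π ⟨j + 1, hk⟩
          rw [eFun_succ π hx (Jn_succ_lt π hx)]
          congr 1
          exact Fin.ext (by simp [hJπ])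
        have e2 : phiFun σ ⟨Gn π j + 1, hx⟩ = σ ⟨j + 1, hk⟩ := by
          show σ (eFun σ ⟨Gn π j + 1, hx⟩) = σ ⟨j + 1, hk⟩
          rw [eFun_succ σ hx (Jn_succ_lt σ hx)]
          congr 1
          exact Fin.ext (by simp [hJσ])
        rw [e1, e2] at h1
        exact h1
  exact Equiv.ext (fun p => by
    have := claim (p : ℕ) p.isLt
    simpa using this)


lemma oneLine_at (π : Equiv.Perm (Fin n)) {j : ℕ} (h : j < n) :
    oneLine π (j + 1) = (π ⟨j, h⟩ : ℕ) + 1 := by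
  unfold oneLine
  rw [dif_pos (show j + 1 - 1 < n by omega)]
  rfl

lemma mem_left_iff (π : Equiv.Perm (Fin n)) (v : ℕ) (C : ℕ → ℕ → Prop)
    [DecidablePred (fun i => C (oneLine π i) (oneLine π (i + 1)))] :
    (v ∈ ((Finset.Icc 1 (n - 1)).filter
        (fun i => C (oneLine π i) (oneLine π (i + 1)))).image (fun i => oneLine π (i + 1))) ↔
    ∃ j : ℕ, ∃ h : j + 1 < n,
      C ((π ⟨j, Nat.lt_of_succ_lt h⟩ : ℕ) + 1) ((π ⟨j + 1, h⟩ : ℕ) + 1) ∧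
      v = (π ⟨j + 1, h⟩ : ℕ) + 1 := by
  simp only [Finset.mem_image, Finset.mem_filter, Finset.mem_Icc]
  constructor
  · rintro ⟨i, ⟨⟨h1, h2⟩, hC⟩, hv⟩
    obtain ⟨j, rfl⟩ : ∃ j, i = j + 1 := ⟨i - 1, by omega⟩
    have hj : j + 1 < n := by omega
    rw [oneLine_at π (j := j + 1) hj, oneLine_at π (j := j) (by omega)] at hC
    rw [oneLine_at π (j := j + 1) hj] at hv
    exact ⟨j, hj, hC, hv.symm⟩
  · rintro ⟨j, hj, hC, hv⟩
    refine ⟨j + 1, ⟨⟨by omega, by omega⟩, ?_⟩, ?_⟩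
    · rw [oneLine_at π (j := j + 1) hj, oneLine_at π (j := j) (by omega)]
      exact hC
    · rw [oneLine_at π (j := j + 1) hj]
      exact hv.symm

lemma mem_right_iff (τ : Equiv.Perm (Fin n)) (v : ℕ) (C : ℕ → ℕ → Prop)
    [DecidablePred (fun i => C (oneLine τ i) i)] :
    (v ∈ ((Finset.Icc 2 n).filter (fun i => C (oneLine τ i) i)).image
        (fun i => oneLine τ i)) ↔
    ∃ x : ℕ, ∃ h : x + 1 < n,
      C ((τ ⟨x + 1, h⟩ : ℕ) + 1) (x + 1 + 1) ∧ v = (τ ⟨x + 1, h⟩ : ℕ) + 1 := by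
  simp only [Finset.mem_image, Finset.mem_filter, Finset.mem_Icc]
  constructor
  · rintro ⟨i, ⟨⟨h1, h2⟩, hC⟩, hv⟩
    obtain ⟨x, rfl⟩ : ∃ x, i = x + 1 + 1 := ⟨i - 2, by omega⟩
    have hx : x + 1 < n := by omega
    rw [oneLine_at τ (j := x + 1) hx] at hC
    rw [oneLine_at τ (j := x + 1) hx] at hv
    exact ⟨x, hx, hC, hv.symm⟩
  · rintro ⟨x, hx, hC, hv⟩
    refine ⟨x + 1 + 1, ⟨⟨by omega, by omega⟩, ?_⟩, ?_⟩
    · rw [oneLine_at τ (j := x + 1) hx]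
      exact hC
    · rw [oneLine_at τ (j := x + 1) hx]
      exact hv.symm

/-- The three facts relating the pair at `Jn π x` with position `x+1` of `Phi π`. -/
lemma key_facts (π : Equiv.Perm (Fin n)) {x : ℕ} (hx : x + 1 < n) :
    ∃ hJ1 : Jn π x + 1 < n, ∃ hJ0 : Jn π x < n,
      ((Phi π ⟨x + 1, hx⟩ : ℕ) = (π ⟨Jn π x + 1, hJ1⟩ : ℕ)) ∧
      ((π ⟨Jn π x + 1, hJ1⟩ : ℕ) ≤ x ↔ (π ⟨Jn π x + 1, hJ1⟩ : ℕ) < (π ⟨Jn π x, hJ0⟩ : ℕ)) ∧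
      ((π ⟨Jn π x + 1, hJ1⟩ : ℕ) = x + 1 ↔
        (π ⟨Jn π x + 1, hJ1⟩ : ℕ) = (π ⟨Jn π x, hJ0⟩ : ℕ) + 1) ∧
      ((π ⟨Jn π x + 1, hJ1⟩ : ℕ) ≠ (π ⟨Jn π x, hJ0⟩ : ℕ)) := by
  have hJ1 : Jn π x + 1 < n := Jn_succ_lt π hx
  have hJ0 : Jn π x < n := by omega
  obtain ⟨k1, k2, k3⟩ := key π hx hJ1 hJ0
  exact ⟨hJ1, hJ0, by rw [Phi_succ π hx hJ1], k1, k2, k3⟩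

lemma desSet_eq (π : Equiv.Perm (Fin n)) : DesSet π = Aexc (Phi π) := by
  ext v
  refine Iff.trans (mem_left_iff π v (fun a b => b < a))
    (Iff.trans ?_ (mem_right_iff (Phi π) v (fun a b => a < b)).symm)
  constructor
  · rintro ⟨j, hj, hcond, hv⟩
    have hx : Gn π j + 1 < n := Gn_succ_lt π hj
    have hJ : Jn π (Gn π j) = j := Jn_Gn π hj
    obtain ⟨hJ1, hJ0, hphi, k1, k2, k3⟩ := key_facts π hx
    have e1 : (π ⟨Jn π (Gn π j) + 1, hJ1⟩ : ℕ) = (π ⟨j + 1, hj⟩ : ℕ) :=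
      apply_val_congr π (by omega) _ _
    have e0 : (π ⟨Jn π (Gn π j), hJ0⟩ : ℕ) = (π ⟨j, by omega⟩ : ℕ) :=
      apply_val_congr π (by omega) _ _
    have e2 : (π ⟨j, Nat.lt_of_succ_lt hj⟩ : ℕ) = (π ⟨j, by omega⟩ : ℕ) :=
      apply_val_congr π rfl _ _
    refine ⟨Gn π j, hx, ?_, ?_⟩ <;> omega
  · rintro ⟨x, hx, hcond, hv⟩
    obtain ⟨hJ1, hJ0, hphi, k1, k2, k3⟩ := key_facts π hx
    have e2 : (π ⟨Jn π x, Nat.lt_of_succ_lt hJ1⟩ : ℕ) = (π ⟨Jn π x, hJ0⟩ : ℕ) :=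
      apply_val_congr π rfl _ _
    refine ⟨Jn π x, hJ1, ?_, ?_⟩ <;> omega

lemma sucSet_eq (π : Equiv.Perm (Fin n)) : SucSet π = FixHat (Phi π) := by
  ext v
  refine Iff.trans (mem_left_iff π v (fun a b => b = a + 1))
    (Iff.trans ?_ (mem_right_iff (Phi π) v (fun a b => a = b)).symm)
  constructor
  · rintro ⟨j, hj, hcond, hv⟩
    have hx : Gn π j + 1 < n := Gn_succ_lt π hj
    have hJ : Jn π (Gn π j) = j := Jn_Gn π hj
    obtain ⟨hJ1, hJ0, hphi, k1, k2, k3⟩ := key_facts π hx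
    have e1 : (π ⟨Jn π (Gn π j) + 1, hJ1⟩ : ℕ) = (π ⟨j + 1, hj⟩ : ℕ) :=
      apply_val_congr π (by omega) _ _
    have e0 : (π ⟨Jn π (Gn π j), hJ0⟩ : ℕ) = (π ⟨j, by omega⟩ : ℕ) :=
      apply_val_congr π (by omega) _ _
    have e2 : (π ⟨j, Nat.lt_of_succ_lt hj⟩ : ℕ) = (π ⟨j, by omega⟩ : ℕ) :=
      apply_val_congr π rfl _ _
    refine ⟨Gn π j, hx, ?_, ?_⟩ <;> omega
  · rintro ⟨x, hx, hcond, hv⟩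
    obtain ⟨hJ1, hJ0, hphi, k1, k2, k3⟩ := key_facts π hx
    have e2 : (π ⟨Jn π x, Nat.lt_of_succ_lt hJ1⟩ : ℕ) = (π ⟨Jn π x, hJ0⟩ : ℕ) :=
      apply_val_congr π rfl _ _
    refine ⟨Jn π x, hJ1, ?_, ?_⟩ <;> omega

lemma asc2_eq (π : Equiv.Perm (Fin n)) : Asc2 π = ExcHat (Phi π) := by
  ext v
  refine Iff.trans (mem_left_iff π v (fun a b => a + 2 ≤ b))
    (Iff.trans ?_ (mem_right_iff (Phi π) v (fun a b => b < a)).symm)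
  constructor
  · rintro ⟨j, hj, hcond, hv⟩
    have hx : Gn π j + 1 < n := Gn_succ_lt π hj
    have hJ : Jn π (Gn π j) = j := Jn_Gn π hj
    obtain ⟨hJ1, hJ0, hphi, k1, k2, k3⟩ := key_facts π hx
    have e1 : (π ⟨Jn π (Gn π j) + 1, hJ1⟩ : ℕ) = (π ⟨j + 1, hj⟩ : ℕ) :=
      apply_val_congr π (by omega) _ _
    have e0 : (π ⟨Jn π (Gn π j), hJ0⟩ : ℕ) = (π ⟨j, by omega⟩ : ℕ) :=
      apply_val_congr π (by omega) _ _
    have e2 : (π ⟨j, Nat.lt_of_succ_lt hj⟩ : ℕ) = (π ⟨j, by omega⟩ : ℕ) :=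
      apply_val_congr π rfl _ _
    refine ⟨Gn π j, hx, ?_, ?_⟩ <;> omega
  · rintro ⟨x, hx, hcond, hv⟩
    obtain ⟨hJ1, hJ0, hphi, k1, k2, k3⟩ := key_facts π hx
    have e2 : (π ⟨Jn π x, Nat.lt_of_succ_lt hJ1⟩ : ℕ) = (π ⟨Jn π x, hJ0⟩ : ℕ) :=
      apply_val_congr π rfl _ _
    refine ⟨Jn π x, hJ1, ?_, ?_⟩ <;> omega

end StmtBij

/-- ∑ x^{asc₂} y^{des} s^{suc} = ∑ x^{êxc} y^{aexc} s^{f̂ix}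
as polynomials in three variables over ℤ. -/
theorem stmt2 (n : ℕ) (hn : 0 < n) :
    (∑ π : Equiv.Perm (Fin n),
        (MvPolynomial.X 0 : MvPolynomial (Fin 3) ℤ) ^ (Asc2 π).card *
          MvPolynomial.X 1 ^ (DesSet π).card * MvPolynomial.X 2 ^ (SucSet π).card) =
      ∑ π : Equiv.Perm (Fin n),
        (MvPolynomial.X 0 : MvPolynomial (Fin 3) ℤ) ^ (ExcHat π).card *
          MvPolynomial.X 1 ^ (Aexc π).card * MvPolynomial.X 2 ^ (FixHat π).card := by
  refine Fintype.sum_bijective StmtBij.Phi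
    (Finite.injective_iff_bijective.mp StmtBij.Phi_inj) _ _ ?_
  intro π
  rw [StmtBij.asc2_eq π, StmtBij.desSet_eq π, StmtBij.sucSet_eq π]
end

section
/- For every positive integer n, the statistic êxc + f̂ix is Eulerian: ∑_{π ∈ 𝔖_n} t^{êxc(π) + f̂ix(π)} = ∑_{π ∈ 𝔖_n} t^{asc(π)} as polynomials in t over the integers, where asc(π) is the number of ascents of π. -/
open Finset

namespace FoataDev

variable {n : ℕ}

/-- prefix maximum of the one-line word of `τ` up to position `k`. -/
def M (τ : Equiv.Perm (Fin n)) (k : Fin n) : Fin n :=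
  (Finset.Iic k).sup' Finset.nonempty_Iic τ

lemma le_M (τ : Equiv.Perm (Fin n)) (k : Fin n) : τ k ≤ M τ k :=
  Finset.le_sup' τ (by simp)

lemma M_mono (τ : Equiv.Perm (Fin n)) {j k : Fin n} (h : j ≤ k) : M τ j ≤ M τ k :=
  Finset.sup'_mono τ (Finset.Iic_subset_Iic.mpr h) Finset.nonempty_Iic

lemma exists_M (τ : Equiv.Perm (Fin n)) (k : Fin n) : ∃ j ≤ k, M τ k = τ j := by
  obtain ⟨j, hj, hje⟩ := Finset.exists_mem_eq_sup' (Finset.nonempty_Iic (a := k)) τ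
  exact ⟨j, by simpa using hj, hje⟩

lemma M_zero (τ : Equiv.Perm (Fin n)) (k : Fin n) (hk : (k : ℕ) = 0) : M τ k = τ k := by
  have h1 : Finset.Iic k = {k} := by
    ext j
    simp only [Finset.mem_Iic, Finset.mem_singleton]
    constructor
    · intro h
      have : (j : ℕ) ≤ (k : ℕ) := h
      exact Fin.ext (by omega)
    · rintro rfl; exact le_refl _
  simp [M, h1]

lemma M_succ (τ : Equiv.Perm (Fin n)) (k : Fin n) (h : (k : ℕ) + 1 < n) :
    M τ ⟨(k : ℕ) + 1, h⟩ = max (M τ k) (τ ⟨(k : ℕ) + 1, h⟩) := by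
  apply le_antisymm
  · apply Finset.sup'_le
    intro j hj
    simp only [Finset.mem_Iic, Fin.le_def] at hj
    rcases Nat.lt_or_ge (j : ℕ) ((k : ℕ) + 1) with h2 | h2
    · exact le_trans (Finset.le_sup' τ (Finset.mem_Iic.mpr (Fin.le_def.mpr (Nat.lt_succ_iff.mp h2)))) (le_max_left _ _)
    · have : j = ⟨(k : ℕ) + 1, h⟩ := Fin.ext (by simpa using le_antisymm hj h2)
      rw [this]; exact le_max_right _ _
  · apply max_le
    · exact M_mono τ (Fin.le_def.mpr (by simp))
    · exact le_M τ _

/-- position `k` ends a "block": either last position or next letter is a new prefix max. -/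
def isEnd (τ : Equiv.Perm (Fin n)) (k : Fin n) : Prop :=
  ∀ h : (k : ℕ) + 1 < n, M τ k < τ ⟨(k : ℕ) + 1, h⟩

/-- Foata image as a raw function on positions. -/
def g (τ : Equiv.Perm (Fin n)) (k : Fin n) : Fin n :=
  if h : (k : ℕ) + 1 < n then
    (if M τ k < τ ⟨(k : ℕ) + 1, h⟩ then M τ k else τ ⟨(k : ℕ) + 1, h⟩)
  else M τ k

lemma M_ne_next (τ : Equiv.Perm (Fin n)) (k : Fin n) (h : (k : ℕ) + 1 < n) :
    τ ⟨(k : ℕ) + 1, h⟩ ≠ M τ k := by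
  obtain ⟨j, hj, hje⟩ := exists_M τ k
  rw [hje]
  intro he
  have := τ.injective he
  rw [← this] at hj
  exact absurd (Fin.le_def.mp hj) (by simp)

lemma g_of_end (τ : Equiv.Perm (Fin n)) (k : Fin n) (h : isEnd τ k) : g τ k = M τ k := by
  unfold g
  split
  · next h1 => rw [if_pos (h h1)]
  · rfl

lemma not_end_succ_lt (τ : Equiv.Perm (Fin n)) {k : Fin n} (h : ¬ isEnd τ k) :
    (k : ℕ) + 1 < n := by
  by_contra h1
  exact h (fun h2 => absurd h2 h1)

lemma g_of_not_end (τ : Equiv.Perm (Fin n)) {k : Fin n} (h : ¬ isEnd τ k) :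
    g τ k = τ ⟨(k : ℕ) + 1, not_end_succ_lt τ h⟩ ∧
      τ ⟨(k : ℕ) + 1, not_end_succ_lt τ h⟩ < M τ k := by
  have h1 := not_end_succ_lt τ h
  have h2 : ¬ M τ k < τ ⟨(k : ℕ) + 1, h1⟩ := by
    intro hc; exact h (fun _ => hc)
  have h3 : τ ⟨(k : ℕ) + 1, h1⟩ < M τ k :=
    lt_of_le_of_ne (not_lt.mp h2) (M_ne_next τ k h1)
  constructor
  · unfold g; rw [dif_pos h1, if_neg h2]
  · exact h3

lemma g_injective (τ : Equiv.Perm (Fin n)) : Function.Injective (g τ) := by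
  intro k j he
  by_contra hne
  -- wlog k < j
  wlog hlt : k < j generalizing k j
  · exact this he.symm (Ne.symm hne) (lt_of_le_of_ne (not_lt.mp hlt) (Ne.symm hne))
  by_cases hk : isEnd τ k
  · -- k end: g k = M k; since k < j, k+1 ≤ j so k+1 < n
    have hk1 : (k : ℕ) + 1 < n := by
      have := j.isLt
      have := Fin.lt_def.mp hlt
      omega
    have hMlt : M τ k < τ ⟨(k : ℕ) + 1, hk1⟩ := hk hk1
    have hMk : g τ k = M τ k := g_of_end τ k hk
    have hle : τ ⟨(k : ℕ) + 1, hk1⟩ ≤ M τ j :=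
      le_trans (le_M τ _) (M_mono τ (Fin.le_def.mpr (Fin.lt_def.mp hlt)))
    by_cases hj : isEnd τ j
    · rw [hMk, g_of_end τ j hj] at he
      exact absurd he (ne_of_lt (lt_of_lt_of_le hMlt hle))
    · obtain ⟨hgj, hjlt⟩ := g_of_not_end τ hj
      rw [hMk, hgj] at he
      -- M τ k = τ (j+1), but M τ k = τ i with i ≤ k < j+1
      obtain ⟨i, hi, hie⟩ := exists_M τ k
      rw [hie] at he
      have := τ.injective he
      have : (i : ℕ) = (j : ℕ) + 1 := by rw [this]
      have hik : (i : ℕ) ≤ (k : ℕ) := Fin.le_def.mp hi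
      have := Fin.lt_def.mp hlt
      omega
  · obtain ⟨hgk, hklt⟩ := g_of_not_end τ hk
    by_cases hj : isEnd τ j
    · rw [hgk, g_of_end τ j hj] at he
      have h2 : M τ k ≤ M τ j := M_mono τ (le_of_lt hlt)
      exact absurd (he ▸ lt_of_lt_of_le hklt h2) (lt_irrefl _)
    · obtain ⟨hgj, hjlt⟩ := g_of_not_end τ hj
      rw [hgk, hgj] at he
      have := τ.injective he
      have : (k : ℕ) + 1 = (j : ℕ) + 1 := by
        have h2 := Fin.ext_iff.mp this
        simpa using h2
      exact hne (Fin.ext (by omega))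

noncomputable def foata (τ : Equiv.Perm (Fin n)) : Equiv.Perm (Fin n) :=
  τ.symm.trans (Equiv.ofBijective (g τ) (Finite.injective_iff_bijective.mp (g_injective τ)))

lemma foata_apply (τ : Equiv.Perm (Fin n)) (k : Fin n) : foata τ (τ k) = g τ k := by
  simp [foata, Equiv.ofBijective]

def goodStart (τ : Equiv.Perm (Fin n)) (s : Fin n) : Prop := M τ s = τ s

def inBlock (τ : Equiv.Perm (Fin n)) (s j : Fin n) : Prop :=
  s ≤ j ∧ ∀ i : Fin n, s ≤ i → i < j → ¬ isEnd τ i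

lemma inBlock_self (τ : Equiv.Perm (Fin n)) (s : Fin n) : inBlock τ s s :=
  ⟨le_refl _, fun i h1 h2 => absurd (lt_of_le_of_lt h1 h2) (lt_irrefl _)⟩

lemma inBlock_succ (τ : Equiv.Perm (Fin n)) {s j : Fin n} (hb : inBlock τ s j)
    (he : ¬ isEnd τ j) (h1 : (j : ℕ) + 1 < n) : inBlock τ s ⟨(j : ℕ) + 1, h1⟩ := by
  refine ⟨le_trans hb.1 (Fin.le_def.mpr (by exact Nat.le_succ _)), ?_⟩
  intro i hsi hij
  have hij' : (i : ℕ) < (j : ℕ) + 1 := Fin.lt_def.mp hij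
  rcases Nat.lt_or_ge (i : ℕ) (j : ℕ) with h2 | h2
  · exact hb.2 i hsi (Fin.lt_def.mpr h2)
  · have : i = j := Fin.ext (by omega)
    rw [this]; exact he

lemma M_of_inBlock (τ : Equiv.Perm (Fin n)) {s j : Fin n} (h : inBlock τ s j) :
    M τ j = M τ s := by
  have key : ∀ d : ℕ, ∀ j : Fin n, inBlock τ s j → (j : ℕ) - (s : ℕ) = d → M τ j = M τ s := by
    intro d
    induction d with
    | zero =>
      intro j hb hd
      have hsj := Fin.le_def.mp hb.1
      have : j = s := Fin.ext (by omega)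
      rw [this]
    | succ d ih =>
      intro j hb hd
      have hsj := Fin.le_def.mp hb.1
      have hj1 : (j : ℕ) - 1 < n := by have := j.isLt; omega
      set j' : Fin n := ⟨(j : ℕ) - 1, hj1⟩ with hj'def
      have hsj' : s ≤ j' := Fin.le_def.mpr (by simp [hj'def]; omega)
      have hj'lt : j' < j := Fin.lt_def.mpr (by simp [hj'def]; omega)
      have hne : ¬ isEnd τ j' := hb.2 j' hsj' hj'lt
      have hsucc : (j' : ℕ) + 1 < n := not_end_succ_lt τ hne
      have hjj : (⟨(j' : ℕ) + 1, hsucc⟩ : Fin n) = j := Fin.ext (by simp [hj'def]; omega)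
      have h2 : τ ⟨(j' : ℕ) + 1, not_end_succ_lt τ hne⟩ < M τ j' := (g_of_not_end τ hne).2
      rw [hjj] at h2
      have h3 : M τ j = max (M τ j') (τ j) := by
        rw [← hjj]; exact M_succ τ j' hsucc
      rw [h3, max_eq_left (le_of_lt h2)]
      apply ih j' ⟨hsj', fun i h4 h5 => hb.2 i h4 (lt_trans h5 hj'lt)⟩
      simp [hj'def]; omega
  exact key ((j : ℕ) - (s : ℕ)) j h rfl

lemma orbit_mem (τ : Equiv.Perm (Fin n)) {s : Fin n} (hs : goodStart τ s) (m : ℕ) :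
    ∃ j : Fin n, inBlock τ s j ∧ (foata τ)^[m] (τ s) = τ j := by
  induction m with
  | zero => exact ⟨s, inBlock_self τ s, rfl⟩
  | succ m ih =>
    obtain ⟨j, hb, hj⟩ := ih
    rw [Function.iterate_succ_apply', hj]
    by_cases he : isEnd τ j
    · refine ⟨s, inBlock_self τ s, ?_⟩
      rw [foata_apply, g_of_end τ j he, M_of_inBlock τ hb, hs]
    · have h1 := not_end_succ_lt τ he
      refine ⟨⟨(j : ℕ) + 1, h1⟩, inBlock_succ τ hb he h1, ?_⟩
      rw [foata_apply]
      exact (g_of_not_end τ he).1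

lemma orbit_le (τ : Equiv.Perm (Fin n)) {s : Fin n} (hs : goodStart τ s) (m : ℕ) :
    (foata τ)^[m] (τ s) ≤ τ s := by
  obtain ⟨j, hb, hj⟩ := orbit_mem τ hs m
  rw [hj]
  calc τ j ≤ M τ j := le_M τ j
  _ = M τ s := M_of_inBlock τ hb
  _ = τ s := hs

lemma reach_start (τ : Equiv.Perm (Fin n)) {s : Fin n} (hs : goodStart τ s) :
    ∀ j, inBlock τ s j → ∃ m, (foata τ)^[m] (τ j) = τ s := by
  have key : ∀ d : ℕ, ∀ j : Fin n, n - (j : ℕ) ≤ d → inBlock τ s j →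
      ∃ m, (foata τ)^[m] (τ j) = τ s := by
    intro d
    induction d with
    | zero => intro j hd _; exact absurd hd (by have := j.isLt; omega)
    | succ d ih =>
      intro j hd hb
      by_cases he : isEnd τ j
      · refine ⟨1, ?_⟩
        simp only [Function.iterate_one]
        rw [foata_apply, g_of_end τ j he, M_of_inBlock τ hb, hs]
      · have h1 := not_end_succ_lt τ he
        obtain ⟨m, hm⟩ := ih ⟨(j : ℕ) + 1, h1⟩ (by simp; omega) (inBlock_succ τ hb he h1)
        refine ⟨m + 1, ?_⟩
        rw [Function.iterate_succ_apply, foata_apply, (g_of_not_end τ he).1]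
        exact hm
  exact fun j h => key (n - (j : ℕ)) j (le_refl _) h

lemma exists_start (τ : Equiv.Perm (Fin n)) {k : Fin n} (hk : goodStart τ k) :
    ∀ j, k ≤ j → ∃ s, k ≤ s ∧ inBlock τ s j ∧ goodStart τ s := by
  have key : ∀ d : ℕ, ∀ j : Fin n, k ≤ j → (j : ℕ) - (k : ℕ) = d →
      ∃ s, k ≤ s ∧ inBlock τ s j ∧ goodStart τ s := by
    intro d
    induction d with
    | zero =>
      intro j hkj hd
      have : j = k := Fin.ext (by have := Fin.le_def.mp hkj; omega)
      rw [this]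
      exact ⟨k, le_refl _, inBlock_self τ k, hk⟩
    | succ d ih =>
      intro j hkj hd
      have hkj' := Fin.le_def.mp hkj
      have hj1 : (j : ℕ) - 1 < n := by have := j.isLt; omega
      set j' : Fin n := ⟨(j : ℕ) - 1, hj1⟩ with hj'def
      have hkjj : k ≤ j' := Fin.le_def.mpr (by simp [hj'def]; omega)
      obtain ⟨s, hks, hb, hgs⟩ := ih j' hkjj (by simp [hj'def]; omega)
      have hsucc : (j' : ℕ) + 1 < n := by simp [hj'def]; have := j.isLt; omega
      have hjj : (⟨(j' : ℕ) + 1, hsucc⟩ : Fin n) = j := Fin.ext (by simp [hj'def]; omega)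
      by_cases he : isEnd τ j'
      · refine ⟨j, hkj, inBlock_self τ j, ?_⟩
        have h2 : M τ j' < τ j := by
          have := he hsucc; rwa [hjj] at this
        have h3 : M τ j = max (M τ j') (τ j) := by rw [← hjj]; exact M_succ τ j' hsucc
        rw [goodStart, h3, max_eq_right (le_of_lt h2)]
      · refine ⟨s, hks, ?_, hgs⟩
        have := inBlock_succ τ hb he (by simpa [hj'def] using hsucc)
        convert this using 2
        exact hjj.symm ▸ rfl
  exact fun j h => key ((j : ℕ) - (k : ℕ)) j h rfl

lemma start_min (τ : Equiv.Perm (Fin n)) {k : Fin n} (hk : goodStart τ k) {v : Fin n}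
    (hnp : ∀ j : Fin n, j < k → τ j ≠ v) (horb : ∀ m, (foata τ)^[m] v ≤ v) :
    τ k ≤ v := by
  set j := τ.symm v with hjdef
  have hv : τ j = v := τ.apply_symm_apply v
  have hkj : k ≤ j := by
    by_contra hc
    exact hnp j (not_le.mp hc) hv
  obtain ⟨s, hks, hb, hgs⟩ := exists_start τ hk j hkj
  obtain ⟨m, hm⟩ := reach_start τ hgs j hb
  have h1 : τ s ≤ τ j := by
    have := horb m
    rw [← hv] at this
    rwa [hm] at this
  have h2 : τ j ≤ τ s := by
    calc τ j ≤ M τ j := le_M τ j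
    _ = M τ s := M_of_inBlock τ hb
    _ = τ s := hgs
  have hjs : τ j = τ s := le_antisymm h2 h1
  calc τ k = M τ k := hk.symm
  _ ≤ M τ s := M_mono τ hks
  _ = τ s := hgs
  _ = τ j := hjs.symm
  _ = v := hv

lemma start_case (τ τ' : Equiv.Perm (Fin n)) (he : foata τ = foata τ') {kv : ℕ}
    (hk : kv < n) (hpre : ∀ j : Fin n, (j : ℕ) < kv → τ j = τ' j)
    (hgs : goodStart τ ⟨kv, hk⟩) (hgs' : goodStart τ' ⟨kv, hk⟩) :
    τ ⟨kv, hk⟩ = τ' ⟨kv, hk⟩ := by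
  apply le_antisymm
  · apply start_min τ hgs
    · intro j hj
      have hj' : (j : ℕ) < kv := Fin.lt_def.mp hj
      rw [hpre j hj']
      exact fun hc => absurd (Fin.ext_iff.mp (τ'.injective hc)) (by simp; omega)
    · intro m
      rw [he]
      exact orbit_le τ' hgs' m
  · apply start_min τ' hgs'
    · intro j hj
      have hj' : (j : ℕ) < kv := Fin.lt_def.mp hj
      rw [← hpre j hj']
      exact fun hc => absurd (Fin.ext_iff.mp (τ.injective hc)) (by simp; omega)
    · intro m
      rw [← he]
      exact orbit_le τ hgs m

theorem foata_injective : Function.Injective (foata (n := n)) := by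
  intro τ τ' he
  have key : ∀ kv : ℕ, ∀ hk : kv < n, τ ⟨kv, hk⟩ = τ' ⟨kv, hk⟩ := by
    intro kv
    induction kv using Nat.strong_induction_on with
    | _ kv ih =>
      intro hk
      have hpre : ∀ j : Fin n, (j : ℕ) < kv → τ j = τ' j := by
        intro j hj
        have := ih (j : ℕ) hj j.isLt
        simpa using this
      match kv, hk with
      | 0, hk =>
        exact start_case τ τ' he hk (by intro j hj; omega) (M_zero τ _ rfl) (M_zero τ' _ rfl)
      | (k' + 1 : ℕ), hk =>
        have hk' : k' < n := by omega
        set K : Fin n := ⟨k', hk'⟩ with hKdef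
        have hM : M τ K = M τ' K := by
          apply Finset.sup'_congr Finset.nonempty_Iic rfl
          intro x hx
          apply hpre
          have := Fin.le_def.mp (Finset.mem_Iic.mp hx)
          simp [hKdef] at this ⊢
          omega
        have hτK : τ K = τ' K := hpre K (by simp [hKdef])
        have hsucc : (K : ℕ) + 1 < n := by simp [hKdef]; omega
        have hKK : (⟨(K : ℕ) + 1, hsucc⟩ : Fin n) = ⟨k' + 1, hk⟩ := Fin.ext (by simp [hKdef])
        have hgg : g τ K = g τ' K := by
          rw [← foata_apply τ K, ← foata_apply τ' K, ← hτK, he]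
        by_cases hend : isEnd τ K
        · have hend' : isEnd τ' K := by
            by_contra hc
            have h2 := (g_of_not_end τ' hc).2
            rw [← (g_of_not_end τ' hc).1, ← hgg, g_of_end τ K hend, hM] at h2
            exact absurd h2 (lt_irrefl _)
          -- goodStart at kv for both
          have hg1 : goodStart τ ⟨k' + 1, hk⟩ := by
            have h2 : M τ K < τ ⟨k' + 1, hk⟩ := by
              have := hend hsucc; rwa [hKK] at this
            have h3 : M τ ⟨k' + 1, hk⟩ = max (M τ K) (τ ⟨k' + 1, hk⟩) := by
              rw [← hKK]; exact M_succ τ K hsucc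
            rw [goodStart, h3, max_eq_right (le_of_lt h2)]
          have hg2 : goodStart τ' ⟨k' + 1, hk⟩ := by
            have h2 : M τ' K < τ' ⟨k' + 1, hk⟩ := by
              have := hend' hsucc; rwa [hKK] at this
            have h3 : M τ' ⟨k' + 1, hk⟩ = max (M τ' K) (τ' ⟨k' + 1, hk⟩) := by
              rw [← hKK]; exact M_succ τ' K hsucc
            rw [goodStart, h3, max_eq_right (le_of_lt h2)]
          exact start_case τ τ' he hk hpre hg1 hg2
        · have hend' : ¬ isEnd τ' K := by
            intro hc
            have h2 := (g_of_not_end τ hend).2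
            rw [← (g_of_not_end τ hend).1, hgg, g_of_end τ' K hc, ← hM] at h2
            exact absurd h2 (lt_irrefl _)
          have h1 := (g_of_not_end τ hend).1
          have h2 := (g_of_not_end τ' hend').1
          have e1 : τ ⟨k' + 1, hk⟩ = g τ K := by rw [h1, ← hKK]
          have e2 : τ' ⟨k' + 1, hk⟩ = g τ' K := by rw [h2, ← hKK]
          rw [e1, e2, hgg]
  apply Equiv.ext
  intro x
  have := key (x : ℕ) x.isLt
  simpa using this

lemma le_g_iff (τ : Equiv.Perm (Fin n)) (k : Fin n) :
    τ k ≤ g τ k ↔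
      ((∃ h : (k : ℕ) + 1 < n, τ k < τ ⟨(k : ℕ) + 1, h⟩) ∨ (k : ℕ) + 1 = n) := by
  by_cases h1 : (k : ℕ) + 1 < n
  · by_cases h2 : M τ k < τ ⟨(k : ℕ) + 1, h1⟩
    · constructor
      · intro _; exact Or.inl ⟨h1, lt_of_le_of_lt (le_M τ k) h2⟩
      · intro _; unfold g; rw [dif_pos h1, if_pos h2]; exact le_M τ k
    · have hg : g τ k = τ ⟨(k : ℕ) + 1, h1⟩ := by unfold g; rw [dif_pos h1, if_neg h2]
      have hne : τ k ≠ τ ⟨(k : ℕ) + 1, h1⟩ := by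
        intro hc
        exact absurd (Fin.ext_iff.mp (τ.injective hc)) (by simp)
      rw [hg]
      constructor
      · intro hle; exact Or.inl ⟨h1, lt_of_le_of_ne hle hne⟩
      · rintro (⟨h3, h4⟩ | h3)
        · exact le_of_lt h4
        · omega
  · have hg : g τ k = M τ k := by unfold g; rw [dif_neg h1]
    constructor
    · intro _; right; have := k.isLt; omega
    · intro _; rw [hg]; exact le_M τ k

lemma card_S (τ : Equiv.Perm (Fin n)) (hn : 0 < n) :
    (univ.filter (fun k : Fin n => τ k ≤ g τ k)).card =
      (univ.filter (fun k : Fin n =>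
        ∃ h : (k : ℕ) + 1 < n, τ k < τ ⟨(k : ℕ) + 1, h⟩)).card + 1 := by
  classical
  have h1 : univ.filter (fun k : Fin n => τ k ≤ g τ k) =
      univ.filter (fun k : Fin n =>
        (∃ h : (k : ℕ) + 1 < n, τ k < τ ⟨(k : ℕ) + 1, h⟩) ∨ (k : ℕ) + 1 = n) := by
    apply Finset.filter_congr
    intro k _
    exact le_g_iff τ k
  rw [h1, Finset.filter_or, Finset.card_union_of_disjoint]
  · congr 1
    have h2 : univ.filter (fun k : Fin n => (k : ℕ) + 1 = n) = {(⟨n - 1, by omega⟩ : Fin n)} := by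
      ext k
      simp only [Finset.mem_filter, Finset.mem_univ, true_and, Finset.mem_singleton,
        Fin.ext_iff]
      omega
    rw [h2, Finset.card_singleton]
  · rw [Finset.disjoint_left]
    intro k hk1 hk2
    simp only [Finset.mem_filter] at hk1 hk2
    obtain ⟨h3, _⟩ := hk1.2
    omega

lemma card_W (τ : Equiv.Perm (Fin n)) (hn : 0 < n) :
    (univ.filter (fun v : Fin n => (v : ℕ) ≠ 0 ∧ v ≤ foata τ v)).card =
      (univ.filter (fun k : Fin n =>
        ∃ h : (k : ℕ) + 1 < n, τ k < τ ⟨(k : ℕ) + 1, h⟩)).card := by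
  classical
  have h1 : univ.filter (fun v : Fin n => (v : ℕ) ≠ 0 ∧ v ≤ foata τ v) =
      (univ.filter (fun k : Fin n => ((τ k : Fin n) : ℕ) ≠ 0 ∧ τ k ≤ g τ k)).image τ := by
    ext v
    simp only [Finset.mem_filter, Finset.mem_univ, true_and, Finset.mem_image]
    constructor
    · rintro ⟨hv0, hvle⟩
      refine ⟨τ.symm v, ?_, τ.apply_symm_apply v⟩
      rw [← foata_apply τ (τ.symm v)] at *
      rw [τ.apply_symm_apply]
      exact ⟨hv0, hvle⟩
    · rintro ⟨k, ⟨hk0, hkle⟩, rfl⟩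
      rw [foata_apply]
      exact ⟨hk0, hkle⟩
  rw [h1, Finset.card_image_of_injective _ τ.injective]
  set k0 := τ.symm ⟨0, hn⟩ with hk0def
  have h2 : univ.filter (fun k : Fin n => ((τ k : Fin n) : ℕ) ≠ 0 ∧ τ k ≤ g τ k) =
      (univ.filter (fun k : Fin n => τ k ≤ g τ k)).erase k0 := by
    ext k
    simp only [Finset.mem_filter, Finset.mem_univ, true_and, Finset.mem_erase]
    constructor
    · rintro ⟨hk0, hkle⟩
      refine ⟨?_, hkle⟩
      intro hc
      rw [hc, hk0def, τ.apply_symm_apply] at hk0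
      exact hk0 rfl
    · rintro ⟨hne, hkle⟩
      refine ⟨?_, hkle⟩
      intro hc
      apply hne
      rw [hk0def]
      apply_fun τ
      rw [τ.apply_symm_apply]
      exact Fin.ext hc
  rw [h2, Finset.card_erase_of_mem, card_S τ hn]
  · omega
  · simp only [Finset.mem_filter, Finset.mem_univ, true_and]
    rw [hk0def, τ.apply_symm_apply]
    exact Fin.le_def.mpr (Nat.zero_le _)


lemma oneLine_eq (π : Equiv.Perm (Fin n)) {i : ℕ} (h2 : i ≤ n) (h3 : 0 < n) :
    oneLine π i = (π ⟨i - 1, by omega⟩ : ℕ) + 1 := by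
  rw [oneLine, dif_pos]

lemma excfix (π : Equiv.Perm (Fin n)) (hn : 0 < n) :
    (ExcHat π).card + (FixHat π).card =
      (univ.filter (fun v : Fin n => (v : ℕ) ≠ 0 ∧ v ≤ π v)).card := by
  classical
  have hinj : Set.InjOn (oneLine π) (Finset.Icc 2 n) := by
    intro a ha b hb hab
    simp only [Finset.coe_Icc, Set.mem_Icc] at ha hb
    rw [oneLine_eq π ha.2 hn, oneLine_eq π hb.2 hn] at hab
    have h3 : π ⟨a - 1, by omega⟩ = π ⟨b - 1, by omega⟩ := Fin.ext (by omega)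
    have h4 := Fin.ext_iff.mp (π.injective h3)
    simp only [Fin.val_mk] at h4
    omega
  have hE : (ExcHat π).card =
      ((Finset.Icc 2 n).filter (fun i => i < oneLine π i)).card := by
    rw [ExcHat]
    exact Finset.card_image_of_injOn
      (hinj.mono (Finset.coe_subset.mpr (Finset.filter_subset _ _)))
  have hF : (FixHat π).card =
      ((Finset.Icc 2 n).filter (fun i => oneLine π i = i)).card := by
    rw [FixHat]
    exact Finset.card_image_of_injOn
      (hinj.mono (Finset.coe_subset.mpr (Finset.filter_subset _ _)))
  rw [hE, hF, ← Finset.card_union_of_disjoint, ← Finset.filter_or]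
  · have hcong : (Finset.Icc 2 n).filter (fun i => i < oneLine π i ∨ oneLine π i = i) =
        (Finset.Icc 2 n).filter (fun i => i ≤ oneLine π i) := by
      apply Finset.filter_congr
      intro i _
      omega
    rw [hcong]
    refine Finset.card_bij' (fun a ha => (⟨a - 1, by
        simp only [Finset.mem_filter, Finset.mem_Icc] at ha; omega⟩ : Fin n))
      (fun v _ => (v : ℕ) + 1) ?_ ?_ ?_ ?_
    · intro a ha
      simp only [Finset.mem_filter, Finset.mem_Icc] at ha
      obtain ⟨m, rfl⟩ : ∃ m, a = m + 1 := ⟨a - 1, by omega⟩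
      obtain ⟨⟨ha2, han⟩, hao⟩ := ha
      rw [oneLine_eq π han hn] at hao
      simp only [Finset.mem_filter, Finset.mem_univ, true_and, Nat.add_sub_cancel,
        Fin.le_def, Fin.val_mk] at hao ⊢
      exact ⟨by omega, by omega⟩
    · intro v hv
      simp only [Finset.mem_filter, Finset.mem_univ, true_and] at hv
      obtain ⟨hv0, hvle⟩ := hv
      have hvn := v.isLt
      have hle := Fin.le_def.mp hvle
      simp only [Finset.mem_filter, Finset.mem_Icc]
      refine ⟨⟨by omega, by omega⟩, ?_⟩
      rw [oneLine_eq π (by omega) hn]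
      have he : (⟨(v : ℕ) + 1 - 1, by omega⟩ : Fin n) = v := Fin.ext (by
        simp only [Fin.val_mk, Nat.add_sub_cancel])
      rw [he]
      omega
    · intro a ha
      simp only [Finset.mem_filter, Finset.mem_Icc] at ha
      simp only [Fin.val_mk]
      omega
    · intro v _
      exact Fin.ext (by simp only [Fin.val_mk, Nat.add_sub_cancel])
  · rw [Finset.disjoint_left]
    intro i h1 h2
    simp only [Finset.mem_filter] at h1 h2
    omega

lemma asc_eq (τ : Equiv.Perm (Fin n)) (hn : 0 < n) :
    ascNum τ = (univ.filter (fun k : Fin n =>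
      ∃ h : (k : ℕ) + 1 < n, τ k < τ ⟨(k : ℕ) + 1, h⟩)).card := by
  classical
  rw [ascNum]
  refine Finset.card_bij' (fun a ha => (⟨a - 1, by
      simp only [Finset.mem_filter, Finset.mem_Icc] at ha; omega⟩ : Fin n))
    (fun k _ => (k : ℕ) + 1) ?_ ?_ ?_ ?_
  · intro a ha
    simp only [Finset.mem_filter, Finset.mem_Icc] at ha
    obtain ⟨m, rfl⟩ : ∃ m, a = m + 1 := ⟨a - 1, by omega⟩
    obtain ⟨⟨ha1, han⟩, hao⟩ := ha
    rw [oneLine_eq τ (by omega) hn, oneLine_eq τ (by omega) hn] at hao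
    simp only [Nat.add_sub_cancel] at hao
    beta_reduce
    simp only [Finset.mem_filter, Finset.mem_univ, true_and, Nat.add_sub_cancel,
      Fin.val_mk]
    have hlt : m + 1 < n := by omega
    refine ⟨hlt, Fin.lt_def.mpr ?_⟩
    omega
  · intro k hk
    simp only [Finset.mem_filter, Finset.mem_univ, true_and] at hk
    obtain ⟨h1, h2⟩ := hk
    have h2' := Fin.lt_def.mp h2
    simp only [Finset.mem_filter, Finset.mem_Icc]
    refine ⟨⟨by omega, by omega⟩, ?_⟩
    rw [oneLine_eq τ (by omega) hn, oneLine_eq τ (by omega) hn]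
    simp only [Nat.add_sub_cancel]
    have he1 : (⟨(k : ℕ), by omega⟩ : Fin n) = k := Fin.ext (by simp only [Fin.val_mk])
    rw [he1]
    omega
  · intro a ha
    simp only [Finset.mem_filter, Finset.mem_Icc] at ha
    simp only [Fin.val_mk]
    omega
  · intro k _
    exact Fin.ext (by simp only [Fin.val_mk, Nat.add_sub_cancel])

lemma exponent_eq (τ : Equiv.Perm (Fin n)) (hn : 0 < n) :
    (ExcHat (foata τ)).card + (FixHat (foata τ)).card = ascNum τ := by
  rw [excfix (foata τ) hn, card_W τ hn, asc_eq τ hn]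

end FoataDev

/-- êxc + f̂ix is an Eulerian statistic:
∑ t^{êxc(π)+f̂ix(π)} = ∑ t^{asc(π)} as polynomials in t over ℤ. -/
theorem stmt3 (n : ℕ) (hn : 0 < n) :
    (∑ π : Equiv.Perm (Fin n),
        (Polynomial.X : Polynomial ℤ) ^ ((ExcHat π).card + (FixHat π).card)) =
      ∑ π : Equiv.Perm (Fin n), (Polynomial.X : Polynomial ℤ) ^ ascNum π := by
  have hb : Function.Bijective (FoataDev.foata (n := n)) :=
    Finite.injective_iff_bijective.mp FoataDev.foata_injective
  exact (Fintype.sum_bijective (FoataDev.foata (n := n)) hb _ _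
    (fun τ => by rw [FoataDev.exponent_eq τ hn])).symm
end

section
/- For every positive integer n, there exists a bijection Φ from the set of permutations of {1,...,n} to itself such that for every permutation π, (Asc₂(Φ(π)), Des(Φ(π)), Suc(Φ(π))) = (Êxc(π), Aexc(π), F̂ix(π)). -/
open Finset

namespace Stmt4Aux

variable {n : ℕ}

/-- Values not appearing before position `j` in the one-line word of `σ`. -/
def remSet (σ : Equiv.Perm (Fin n)) (j : Fin n) : Finset ℕ :=
  (Finset.range n).filter (fun c => ∀ l : Fin n, l < j → (σ l : ℕ) ≠ c)

lemma mem_remSet {σ : Equiv.Perm (Fin n)} {j l : Fin n} (h : j ≤ l) :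
    (σ l : ℕ) ∈ remSet σ j := by
  refine Finset.mem_filter.mpr ⟨Finset.mem_range.mpr (σ l).isLt, ?_⟩
  intro l' hl' hval
  exact absurd (σ.injective (Fin.val_injective hval)) (ne_of_lt (lt_of_lt_of_le hl' h))

lemma remSet_nonempty (σ : Equiv.Perm (Fin n)) (j : Fin n) : (remSet σ j).Nonempty :=
  ⟨_, mem_remSet le_rfl⟩

/-- Maximum of the values of `σ` at positions `≥ j`. -/
def preMax (σ : Equiv.Perm (Fin n)) (j : Fin n) : ℕ :=
  (remSet σ j).max' (remSet_nonempty σ j)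

lemma le_preMax {σ : Equiv.Perm (Fin n)} {j l : Fin n} (h : j ≤ l) :
    (σ l : ℕ) ≤ preMax σ j :=
  Finset.le_max' _ _ (mem_remSet h)

lemma exists_preMax (σ : Equiv.Perm (Fin n)) (j : Fin n) :
    ∃ l : Fin n, j ≤ l ∧ (σ l : ℕ) = preMax σ j := by
  have hmem := Finset.max'_mem (remSet σ j) (remSet_nonempty σ j)
  simp only [remSet, Finset.mem_filter, Finset.mem_range] at hmem
  obtain ⟨hlt, hnot⟩ := hmem
  refine ⟨σ.symm ⟨preMax σ j, hlt⟩, ?_, by simp⟩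
  by_contra hc
  rw [not_le] at hc
  refine hnot _ hc ?_
  show (σ (σ.symm ⟨preMax σ j, hlt⟩) : ℕ) = _
  rw [Equiv.apply_symm_apply]
  rfl

lemma sigma_val_ne' (σ : Equiv.Perm (Fin n)) {x y : Fin n} (h : (x : ℕ) ≠ (y : ℕ)) :
    (σ x : ℕ) ≠ (σ y : ℕ) :=
  fun hh => h (congrArg Fin.val (σ.injective (Fin.val_injective hh)))

/-- The key quantity: `gN σ j = min(word(j-1), suffix max) + 1` (0 at `j = 0`). -/
def gN (σ : Equiv.Perm (Fin n)) (j : Fin n) : ℕ :=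
  if h : (j : ℕ) = 0 then 0
  else min (σ ⟨(j : ℕ) - 1, by have := j.isLt; omega⟩ : ℕ) (preMax σ j) + 1

lemma gN_zero {σ : Equiv.Perm (Fin n)} {j : Fin n} (h : (j : ℕ) = 0) : gN σ j = 0 := by
  unfold gN; rw [dif_pos h]

lemma gN_eq' {σ : Equiv.Perm (Fin n)} {j k : Fin n} (hk : (k : ℕ) + 1 = (j : ℕ)) :
    gN σ j = min (σ k : ℕ) (preMax σ j) + 1 := by
  have hj := j.isLt
  have h0 : ¬((j : ℕ) = 0) := by omega
  have hkj : (⟨(j : ℕ) - 1, by omega⟩ : Fin n) = k := Fin.ext (show (j:ℕ)-1 = (k:ℕ) by omega)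
  unfold gN
  rw [dif_neg h0, hkj]

lemma gN_lt (σ : Equiv.Perm (Fin n)) (j : Fin n) : gN σ j < n := by
  by_cases h0 : (j : ℕ) = 0
  · rw [gN_zero h0]; exact lt_of_le_of_lt (Nat.zero_le _) j.isLt
  · have hj := j.isLt
    set k : Fin n := ⟨(j : ℕ) - 1, by omega⟩ with hkd
    have hk : (k : ℕ) + 1 = (j : ℕ) := by show (j:ℕ)-1+1 = (j:ℕ); omega
    rw [gN_eq' hk]
    obtain ⟨l, hl, hval⟩ := exists_preMax σ j
    have hl' : (j : ℕ) ≤ (l : ℕ) := Fin.le_def.mp hl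
    have hkv : (k : ℕ) = (j : ℕ) - 1 := rfl
    have hkl : (σ k : ℕ) ≠ preMax σ j := by
      rw [← hval]
      exact sigma_val_ne' σ (show (k:ℕ) ≠ (l:ℕ) by omega)
    have h1 : (σ k : ℕ) < n := (σ k).isLt
    have h2 : preMax σ j < n := by rw [← hval]; exact (σ l).isLt
    rcases le_total (σ k : ℕ) (preMax σ j) with h | h
    · rw [min_eq_left h]; omega
    · rw [min_eq_right h]; omega

def gF (σ : Equiv.Perm (Fin n)) (j : Fin n) : Fin n := ⟨gN σ j, gN_lt σ j⟩

lemma gN_ne (σ : Equiv.Perm (Fin n)) {j j' : Fin n} (hlt : j < j') : gN σ j ≠ gN σ j' := by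
  have hjj' : (j : ℕ) < (j' : ℕ) := Fin.lt_def.mp hlt
  have hj'n := j'.isLt
  by_cases h0 : (j : ℕ) = 0
  · rw [gN_zero h0]
    set k' : Fin n := ⟨(j' : ℕ) - 1, by omega⟩ with hk'd
    have hk' : (k' : ℕ) + 1 = (j' : ℕ) := by show (j':ℕ)-1+1 = (j':ℕ); omega
    rw [gN_eq' hk']
    omega
  · set k : Fin n := ⟨(j : ℕ) - 1, by omega⟩ with hkd
    set k' : Fin n := ⟨(j' : ℕ) - 1, by omega⟩ with hk'd
    have hk : (k : ℕ) + 1 = (j : ℕ) := by show (j:ℕ)-1+1 = (j:ℕ); omega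
    have hk' : (k' : ℕ) + 1 = (j' : ℕ) := by show (j':ℕ)-1+1 = (j':ℕ); omega
    rw [gN_eq' hk, gN_eq' hk']
    obtain ⟨l1, hl1, hsl1⟩ := exists_preMax σ j'
    have hl1' : (j' : ℕ) ≤ (l1 : ℕ) := Fin.le_def.mp hl1
    have hkv : (k : ℕ) = (j : ℕ) - 1 := rfl
    have hk'v : (k' : ℕ) = (j' : ℕ) - 1 := rfl
    have ha's : (σ k' : ℕ) ≤ preMax σ j := le_preMax (Fin.le_def.mpr (by omega))
    have hs's : preMax σ j' ≤ preMax σ j := by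
      rw [← hsl1]; exact le_preMax (Fin.le_def.mpr (by omega))
    intro heq
    have heq' : min (σ k : ℕ) (preMax σ j) = min (σ k' : ℕ) (preMax σ j') := by omega
    rcases le_total (σ k : ℕ) (preMax σ j) with h1 | h1
    · rw [min_eq_left h1] at heq'
      rcases le_total (σ k' : ℕ) (preMax σ j') with h2 | h2
      · rw [min_eq_left h2] at heq'
        exact sigma_val_ne' σ (show (k:ℕ) ≠ (k':ℕ) by omega) heq'
      · rw [min_eq_right h2] at heq'
        exact sigma_val_ne' σ (show (k:ℕ) ≠ (l1:ℕ) by omega) (heq'.trans hsl1.symm)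
    · rw [min_eq_right h1] at heq'
      rcases le_total (σ k' : ℕ) (preMax σ j') with h2 | h2
      · rw [min_eq_left h2] at heq'
        have ha'e : (σ k' : ℕ) = preMax σ j' := by omega
        have heq2 : (σ k' : ℕ) = (σ l1 : ℕ) := by rw [hsl1]; exact ha'e
        exact sigma_val_ne' σ (show (k':ℕ) ≠ (l1:ℕ) by omega) heq2
      · rw [min_eq_right h2] at heq'
        have ha'e : (σ k' : ℕ) = preMax σ j' := by omega
        have heq2 : (σ k' : ℕ) = (σ l1 : ℕ) := by rw [hsl1]; exact ha'e
        exact sigma_val_ne' σ (show (k':ℕ) ≠ (l1:ℕ) by omega) heq2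

lemma gF_injective (σ : Equiv.Perm (Fin n)) : Function.Injective (gF σ) := by
  intro j j' h
  have hval : gN σ j = gN σ j' := congrArg Fin.val h
  rcases lt_trichotomy j j' with hlt | heq | hlt
  · exact absurd hval (gN_ne σ hlt)
  · exact heq
  · exact absurd hval.symm (gN_ne σ hlt)

/-- The permutation `τ` with `τ(word j) = gN σ j`. -/
noncomputable def tauPerm (σ : Equiv.Perm (Fin n)) : Equiv.Perm (Fin n) :=
  Equiv.ofBijective (fun x => gF σ (σ.symm x))
    (Finite.injective_iff_bijective.mp ((gF_injective σ).comp σ.symm.injective))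

lemma tauPerm_apply (σ : Equiv.Perm (Fin n)) (j : Fin n) : tauPerm σ (σ j) = gF σ j := by
  have h : tauPerm σ (σ j) = gF σ (σ.symm (σ j)) := rfl
  rw [h, Equiv.symm_apply_apply]

/-- The bijection word ↦ permutation. -/
noncomputable def psi (σ : Equiv.Perm (Fin n)) : Equiv.Perm (Fin n) := (tauPerm σ).symm

lemma psi_apply (σ : Equiv.Perm (Fin n)) (j : Fin n) : psi σ (gF σ j) = σ j := by
  rw [psi, ← tauPerm_apply σ j, Equiv.symm_apply_apply]

lemma psi_symm_apply (σ : Equiv.Perm (Fin n)) (j : Fin n) : (psi σ).symm (σ j) = gF σ j := by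
  rw [psi, Equiv.symm_symm, tauPerm_apply]

lemma preMax_congr {σ σ' : Equiv.Perm (Fin n)} {j : Fin n}
    (h : ∀ l : Fin n, l < j → σ l = σ' l) : preMax σ j = preMax σ' j := by
  have hs : remSet σ j = remSet σ' j := by
    unfold remSet
    apply Finset.filter_congr
    intro c _
    constructor
    · intro hh l hl; rw [← h l hl]; exact hh l hl
    · intro hh l hl; rw [h l hl]; exact hh l hl
  unfold preMax
  apply le_antisymm
  · apply Finset.max'_le
    intro b hb
    exact Finset.le_max' _ _ (by rwa [← hs])
  · apply Finset.max'_le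
    intro b hb
    exact Finset.le_max' _ _ (by rwa [hs])

lemma gN_congr {σ σ' : Equiv.Perm (Fin n)} {j : Fin n}
    (h : ∀ l : Fin n, l < j → σ l = σ' l) : gN σ j = gN σ' j := by
  by_cases h0 : (j : ℕ) = 0
  · rw [gN_zero h0, gN_zero h0]
  · have hj := j.isLt
    set k : Fin n := ⟨(j : ℕ) - 1, by omega⟩ with hkd
    have hk : (k : ℕ) + 1 = (j : ℕ) := by show (j:ℕ)-1+1 = (j:ℕ); omega
    have hklt : k < j := Fin.lt_def.mpr (by show (j:ℕ)-1 < (j:ℕ); omega)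
    rw [gN_eq' (σ := σ) hk, gN_eq' (σ := σ') hk, preMax_congr h, h k hklt]

lemma psi_injective : Function.Injective (psi (n := n)) := by
  intro σ σ' h
  have key : ∀ m : ℕ, ∀ j : Fin n, (j : ℕ) ≤ m → σ j = σ' j := by
    intro m
    induction m with
    | zero =>
        intro j hj
        have h0 : (j : ℕ) = 0 := by omega
        have e1 : gF σ j = gF σ' j :=
          Fin.ext (by show gN σ j = gN σ' j; rw [gN_zero h0, gN_zero h0])
        calc σ j = psi σ (gF σ j) := (psi_apply σ j).symm
          _ = psi σ' (gF σ' j) := by rw [h, e1]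
          _ = σ' j := psi_apply σ' j
    | succ m ih =>
        intro j hj
        by_cases hc : (j : ℕ) ≤ m
        · exact ih j hc
        · have hpre : ∀ l : Fin n, l < j → σ l = σ' l := fun l hl =>
            ih l (by have := Fin.lt_def.mp hl; omega)
          have e1 : gF σ j = gF σ' j := Fin.ext (gN_congr hpre)
          calc σ j = psi σ (gF σ j) := (psi_apply σ j).symm
            _ = psi σ' (gF σ' j) := by rw [h, e1]
            _ = σ' j := psi_apply σ' j
  exact Equiv.ext fun j => key (j : ℕ) j le_rfl

lemma psi_bijective : Function.Bijective (psi (n := n)) :=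
  Finite.injective_iff_bijective.mp psi_injective

lemma oneLine_eq_of (ρ : Equiv.Perm (Fin n)) {k : ℕ} (h : k - 1 < n) :
    oneLine ρ k = (ρ ⟨k - 1, h⟩ : ℕ) + 1 := by
  unfold oneLine; rw [dif_pos h]

lemma word_mem_iff {σ : Equiv.Perm (Fin n)} (p : ℕ → ℕ → Prop)
    [DecidablePred fun i => p (oneLine σ i) (oneLine σ (i + 1))] {v : ℕ} :
    v ∈ ((Finset.Icc 1 (n - 1)).filter (fun i => p (oneLine σ i) (oneLine σ (i + 1)))).image
        (fun i => oneLine σ (i + 1)) ↔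
      ∃ j k : Fin n, (k : ℕ) + 1 = (j : ℕ) ∧ (σ j : ℕ) + 1 = v ∧
        p ((σ k : ℕ) + 1) ((σ j : ℕ) + 1) := by
  constructor
  · intro hv
    obtain ⟨i, hi, hiv⟩ := Finset.mem_image.mp hv
    obtain ⟨hicc, hp⟩ := Finset.mem_filter.mp hi
    obtain ⟨h1, h2⟩ := Finset.mem_Icc.mp hicc
    have hin : i < n := by omega
    have hi1n : i - 1 < n := by omega
    refine ⟨⟨i, hin⟩, ⟨i - 1, hi1n⟩, show i - 1 + 1 = i by omega, ?_, ?_⟩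
    · rw [oneLine_eq_of σ (show i + 1 - 1 < n by omega)] at hiv
      exact hiv
    · rw [oneLine_eq_of σ hi1n, oneLine_eq_of σ (show i + 1 - 1 < n by omega)] at hp
      exact hp
  · rintro ⟨j, k, hk, hv, hp⟩
    have hj := j.isLt
    apply Finset.mem_image.mpr
    refine ⟨(j : ℕ), Finset.mem_filter.mpr ⟨Finset.mem_Icc.mpr ⟨by omega, by omega⟩, ?_⟩, ?_⟩
    · rw [oneLine_eq_of σ (show (j:ℕ) - 1 < n by omega),
        oneLine_eq_of σ (show (j:ℕ) + 1 - 1 < n by omega)]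
      have hkk : (⟨(j:ℕ) - 1, by omega⟩ : Fin n) = k := Fin.ext (show (j:ℕ)-1 = (k:ℕ) by omega)
      rw [hkk]
      exact hp
    · rw [oneLine_eq_of σ (show (j:ℕ) + 1 - 1 < n by omega)]
      exact hv

lemma perm_mem_iff (σ : Equiv.Perm (Fin n)) (q : ℕ → ℕ → Prop)
    [DecidablePred fun i => q i (oneLine (psi σ) i)] {v : ℕ} :
    v ∈ ((Finset.Icc 2 n).filter (fun i => q i (oneLine (psi σ) i))).image
        (fun i => oneLine (psi σ) i) ↔
      ∃ j k : Fin n, (k : ℕ) + 1 = (j : ℕ) ∧ (σ j : ℕ) + 1 = v ∧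
        q (gN σ j + 1) ((σ j : ℕ) + 1) := by
  constructor
  · intro hv
    obtain ⟨i, hi, hiv⟩ := Finset.mem_image.mp hv
    obtain ⟨hicc, hq⟩ := Finset.mem_filter.mp hi
    obtain ⟨h2, hn'⟩ := Finset.mem_Icc.mp hicc
    have hi1n : i - 1 < n := by omega
    have hol : oneLine (psi σ) i = (psi σ ⟨i - 1, hi1n⟩ : ℕ) + 1 := oneLine_eq_of _ hi1n
    set j : Fin n := σ.symm (psi σ ⟨i - 1, hi1n⟩) with hjd
    have hσj : σ j = psi σ ⟨i - 1, hi1n⟩ := Equiv.apply_symm_apply σ _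
    have hgf : gF σ j = ⟨i - 1, hi1n⟩ := by
      have h1 : (psi σ).symm (σ j) = gF σ j := psi_symm_apply σ j
      rw [hσj, Equiv.symm_apply_apply] at h1
      exact h1.symm
    have hgN : gN σ j = i - 1 := congrArg Fin.val hgf
    have hj0 : (j : ℕ) ≠ 0 := by
      intro h0
      rw [gN_zero h0] at hgN; omega
    have hjlt := j.isLt
    refine ⟨j, ⟨(j:ℕ) - 1, by omega⟩, show (j:ℕ) - 1 + 1 = (j:ℕ) by omega, ?_, ?_⟩
    · rw [hσj, ← hol]; exact hiv
    · rw [hσj, hgN]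
      have hii : i - 1 + 1 = i := by omega
      rw [hii, ← hol]
      exact hq
  · rintro ⟨j, k, hk, hv, hq⟩
    have hlt := gN_lt σ j
    have hpos : 1 ≤ gN σ j := by rw [gN_eq' hk]; omega
    apply Finset.mem_image.mpr
    refine ⟨gN σ j + 1, Finset.mem_filter.mpr ⟨Finset.mem_Icc.mpr ⟨by omega, by omega⟩, ?_⟩, ?_⟩
    · rw [oneLine_eq_of _ (show gN σ j + 1 - 1 < n by omega)]
      have hfe : psi σ ⟨gN σ j + 1 - 1, by omega⟩ = σ j := psi_apply σ j
      rw [hfe]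
      exact hq
    · rw [oneLine_eq_of _ (show gN σ j + 1 - 1 < n by omega)]
      have hfe : psi σ ⟨gN σ j + 1 - 1, by omega⟩ = σ j := psi_apply σ j
      rw [hfe]
      exact hv

lemma cond_iff (σ : Equiv.Perm (Fin n)) {j k : Fin n} (hk : (k : ℕ) + 1 = (j : ℕ)) :
    ((((σ k : ℕ) + 1) + 2 ≤ (σ j : ℕ) + 1) ↔ (gN σ j + 1 < (σ j : ℕ) + 1))
    ∧ (((σ j : ℕ) + 1 < (σ k : ℕ) + 1) ↔ ((σ j : ℕ) + 1 < gN σ j + 1))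
    ∧ (((σ j : ℕ) + 1 = ((σ k : ℕ) + 1) + 1) ↔ ((σ j : ℕ) + 1 = gN σ j + 1)) := by
  have hgn := gN_eq' (σ := σ) hk
  have hbs : (σ j : ℕ) ≤ preMax σ j := le_preMax le_rfl
  have hab : (σ k : ℕ) ≠ (σ j : ℕ) := sigma_val_ne' σ (by omega)
  rcases le_total (σ k : ℕ) (preMax σ j) with h | h
  · rw [min_eq_left h] at hgn
    exact ⟨by omega, by omega, by omega⟩
  · rw [min_eq_right h] at hgn
    exact ⟨by omega, by omega, by omega⟩

lemma asc2_psi (σ : Equiv.Perm (Fin n)) : Asc2 σ = ExcHat (psi σ) := by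
  ext v
  constructor
  · intro h
    obtain ⟨j, k, hk, hv, hp⟩ := (word_mem_iff (σ := σ) (fun x y => x + 2 ≤ y)).mp h
    exact (perm_mem_iff σ (fun i u => i < u)).mpr ⟨j, k, hk, hv, ((cond_iff σ hk).1).mp hp⟩
  · intro h
    obtain ⟨j, k, hk, hv, hq⟩ := (perm_mem_iff σ (fun i u => i < u)).mp h
    exact (word_mem_iff (σ := σ) (fun x y => x + 2 ≤ y)).mpr
      ⟨j, k, hk, hv, ((cond_iff σ hk).1).mpr hq⟩

lemma des_psi (σ : Equiv.Perm (Fin n)) : DesSet σ = Aexc (psi σ) := by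
  ext v
  constructor
  · intro h
    obtain ⟨j, k, hk, hv, hp⟩ := (word_mem_iff (σ := σ) (fun x y => y < x)).mp h
    exact (perm_mem_iff σ (fun i u => u < i)).mpr ⟨j, k, hk, hv, ((cond_iff σ hk).2.1).mp hp⟩
  · intro h
    obtain ⟨j, k, hk, hv, hq⟩ := (perm_mem_iff σ (fun i u => u < i)).mp h
    exact (word_mem_iff (σ := σ) (fun x y => y < x)).mpr
      ⟨j, k, hk, hv, ((cond_iff σ hk).2.1).mpr hq⟩

lemma suc_psi (σ : Equiv.Perm (Fin n)) : SucSet σ = FixHat (psi σ) := by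
  ext v
  constructor
  · intro h
    obtain ⟨j, k, hk, hv, hp⟩ := (word_mem_iff (σ := σ) (fun x y => y = x + 1)).mp h
    exact (perm_mem_iff σ (fun i u => u = i)).mpr ⟨j, k, hk, hv, ((cond_iff σ hk).2.2).mp hp⟩
  · intro h
    obtain ⟨j, k, hk, hv, hq⟩ := (perm_mem_iff σ (fun i u => u = i)).mp h
    exact (word_mem_iff (σ := σ) (fun x y => y = x + 1)).mpr
      ⟨j, k, hk, hv, ((cond_iff σ hk).2.2).mpr hq⟩

end Stmt4Aux

/-- there is a bijection Φ of 𝔖ₙ with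
(Asc₂(Φ(π)), Des(Φ(π)), Suc(Φ(π))) = (Êxc(π), Aexc(π), F̂ix(π)) for all π. -/
theorem stmt4 (n : ℕ) (hn : 0 < n) :
    ∃ Φ : Equiv.Perm (Fin n) → Equiv.Perm (Fin n), Function.Bijective Φ ∧
      ∀ π : Equiv.Perm (Fin n),
        Asc2 (Φ π) = ExcHat π ∧ DesSet (Φ π) = Aexc π ∧ SucSet (Φ π) = FixHat π := by
  obtain ⟨E, hE⟩ : ∃ E : Equiv.Perm (Fin n) ≃ Equiv.Perm (Fin n), ∀ x, E x = Stmt4Aux.psi x :=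
    ⟨Equiv.ofBijective _ Stmt4Aux.psi_bijective, fun _ => rfl⟩
  refine ⟨fun π => E.symm π, E.symm.bijective, fun π => ?_⟩
  have hp : Stmt4Aux.psi (E.symm π) = π := by rw [← hE]; exact E.apply_symm_apply π
  refine ⟨?_, ?_, ?_⟩
  · rw [Stmt4Aux.asc2_psi, hp]
  · rw [Stmt4Aux.des_psi, hp]
  · rw [Stmt4Aux.suc_psi, hp]
end

section
/- For every positive integer n, ∑_{π ∈ 𝔖_n} q^{depth(π)} = ∑_{π ∈ 𝔖_n} q^{drp(π)} as polynomials in q over the integers. -/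
open Finset

namespace Foata

variable {n : ℕ}

/-- max of the prefix of the word `w` up to position `j` (0-indexed). -/
def Mx (w : Equiv.Perm (Fin n)) (j : Fin n) : Fin n :=
  (Finset.Iic j).sup' ⟨j, Finset.mem_Iic.2 le_rfl⟩ w

lemma le_Mx (w : Equiv.Perm (Fin n)) {i j : Fin n} (h : i ≤ j) : w i ≤ Mx w j :=
  Finset.le_sup' w (Finset.mem_Iic.2 h)

lemma Mx_mono (w : Equiv.Perm (Fin n)) {j k : Fin n} (h : j ≤ k) : Mx w j ≤ Mx w k :=
  Finset.sup'_mono w (Finset.Iic_subset_Iic.2 h) _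

lemma exists_Mx (w : Equiv.Perm (Fin n)) (j : Fin n) : ∃ p ≤ j, Mx w j = w p := by
  obtain ⟨p, hp, hp2⟩ := Finset.exists_mem_eq_sup' (⟨j, Finset.mem_Iic.2 le_rfl⟩ :
    (Finset.Iic j).Nonempty) w
  exact ⟨p, Finset.mem_Iic.1 hp, hp2⟩

lemma Mx_le (w : Equiv.Perm (Fin n)) {j b : Fin n} (h : ∀ i ≤ j, w i ≤ b) : Mx w j ≤ b :=
  Finset.sup'_le _ _ fun i hi => h i (Finset.mem_Iic.1 hi)

/-- the inverse-Foata permutation as a function. -/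
def foataFn (w : Equiv.Perm (Fin n)) (x : Fin n) : Fin n :=
  if h : ((w.symm x : ℕ)) + 1 < n then
    (if w ⟨(w.symm x : ℕ) + 1, h⟩ < Mx w (w.symm x) then w ⟨(w.symm x : ℕ) + 1, h⟩
     else Mx w (w.symm x))
  else Mx w (w.symm x)

lemma foataFn_apply (w : Equiv.Perm (Fin n)) (j : Fin n) :
    foataFn w (w j) = if h : (j : ℕ) + 1 < n then
      (if w ⟨(j : ℕ) + 1, h⟩ < Mx w j then w ⟨(j : ℕ) + 1, h⟩ else Mx w j)
    else Mx w j := by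
  simp [foataFn]

lemma foataFn_inj (w : Equiv.Perm (Fin n)) : Function.Injective (foataFn w) := by
  intro x y hxy
  by_contra hne
  -- work with positions
  set j := w.symm x with hj
  set k := w.symm y with hk
  have hx : w j = x := w.apply_symm_apply x
  have hy : w k = y := w.apply_symm_apply y
  have hjk : j ≠ k := fun h => hne (by rw [← hx, ← hy, h])
  -- wlog j < k
  have main : ∀ j k : Fin n, j < k → foataFn w (w j) ≠ foataFn w (w k) := by
    intro j k hlt heq
    rw [foataFn_apply, foataFn_apply] at heq
    have hjn : (j : ℕ) + 1 < n := lt_of_le_of_lt (Nat.succ_le_of_lt hlt) k.isLt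
    rw [dif_pos hjn] at heq
    have hj1k : (⟨(j : ℕ) + 1, hjn⟩ : Fin n) ≤ k := Nat.succ_le_of_lt hlt
    by_cases h1 : w ⟨(j : ℕ) + 1, hjn⟩ < Mx w j
    · rw [if_pos h1] at heq
      -- f (w j) = w (j+1) < Mx w j ≤ Mx w k
      have hlt2 : w ⟨(j : ℕ) + 1, hjn⟩ < Mx w k := lt_of_lt_of_le h1 (Mx_mono w hlt.le)
      by_cases h2 : (k : ℕ) + 1 < n
      · rw [dif_pos h2] at heq
        by_cases h3 : w ⟨(k : ℕ) + 1, h2⟩ < Mx w k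
        · rw [if_pos h3] at heq
          have hv : (j : ℕ) + 1 = (k : ℕ) + 1 := by
            simpa using congrArg Fin.val (w.injective heq)
          omega
        · rw [if_neg h3] at heq; exact absurd heq (ne_of_lt hlt2)
      · rw [dif_neg h2] at heq; exact absurd heq (ne_of_lt hlt2)
    · rw [if_neg h1] at heq
      -- else case at j : w (j+1) > Mx w j, since ≠ (injectivity)
      have hge : Mx w j ≤ w ⟨(j : ℕ) + 1, hjn⟩ := not_lt.1 h1
      have hne2 : Mx w j ≠ w ⟨(j : ℕ) + 1, hjn⟩ := by
        obtain ⟨p, hp, hpe⟩ := exists_Mx w j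
        rw [hpe]
        intro hcon
        have hv : (p : ℕ) = (j : ℕ) + 1 := by simpa using congrArg Fin.val (w.injective hcon)
        have hpj : (p : ℕ) ≤ (j : ℕ) := hp
        omega
      have hgt : Mx w j < w ⟨(j : ℕ) + 1, hjn⟩ := lt_of_le_of_ne hge hne2
      have hcon : Mx w j < Mx w k :=
        lt_of_lt_of_le hgt (le_Mx w hj1k)
      -- but heq says Mx w j = f (w k) ≤ ... need: f(w k) cases
      by_cases h2 : (k : ℕ) + 1 < n
      · rw [dif_pos h2] at heq
        by_cases h3 : w ⟨(k : ℕ) + 1, h2⟩ < Mx w k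
        · rw [if_pos h3] at heq
          -- Mx w j = w (k+1); but Mx w j = w p, p ≤ j < k+1.
          obtain ⟨p, hp, hpe⟩ := exists_Mx w j
          rw [hpe] at heq
          have hv : (p : ℕ) = (k : ℕ) + 1 := by simpa using congrArg Fin.val (w.injective heq)
          have hpj : (p : ℕ) ≤ (j : ℕ) := hp
          have hjk2 : (j : ℕ) < (k : ℕ) := hlt
          omega
        · rw [if_neg h3] at heq; exact absurd heq (ne_of_lt hcon)
      · rw [dif_neg h2] at heq; exact absurd heq (ne_of_lt hcon)
  rw [← hx, ← hy] at hxy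
  rcases lt_or_gt_of_ne hjk with h | h
  · exact main j k h hxy
  · exact main k j h hxy.symm

/-- the inverse-Foata permutation. -/
noncomputable def foataPerm (w : Equiv.Perm (Fin n)) : Equiv.Perm (Fin n) :=
  Equiv.ofBijective _ (Finite.injective_iff_bijective.1 (foataFn_inj w))

lemma foataPerm_apply (w : Equiv.Perm (Fin n)) (x : Fin n) :
    foataPerm w x = foataFn w x := rfl


lemma Mx_congr {v w : Equiv.Perm (Fin n)} {i : Fin n} (h : ∀ p, p ≤ i → v p = w p) :
    Mx v i = Mx w i :=
  Finset.sup'_congr _ rfl fun p hp => h p (Finset.mem_Iic.1 hp)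

lemma Mx_eq_self {w : Equiv.Perm (Fin n)} {j : Fin n} (h : ∀ i, i ≤ j → w i ≤ w j) :
    Mx w j = w j :=
  le_antisymm (Mx_le w h) (le_Mx w le_rfl)

lemma Mx_succ (w : Equiv.Perm (Fin n)) {j : Fin n} (h : (j : ℕ) + 1 < n) :
    Mx w ⟨(j : ℕ) + 1, h⟩ = max (Mx w j) (w ⟨(j : ℕ) + 1, h⟩) := by
  apply le_antisymm
  · apply Mx_le
    intro i hi
    have hi' : (i : ℕ) ≤ (j : ℕ) + 1 := hi
    rcases Nat.lt_or_ge (i : ℕ) ((j : ℕ) + 1) with h1 | h1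
    · exact le_max_of_le_left (le_Mx w (by exact Nat.lt_succ_iff.1 h1))
    · have : i = (⟨(j : ℕ) + 1, h⟩ : Fin n) := Fin.ext (le_antisymm hi' h1)
      rw [this]; exact le_max_right _ _
  · apply max_le
    · exact Mx_mono w (by simp [Fin.le_def])
    · exact le_Mx w le_rfl

lemma key {v w : Equiv.Perm (Fin n)} (h : ∀ x, foataFn v x = foataFn w x) (j : Fin n)
    (hpre : ∀ i : Fin n, i < j → v i = w i)
    (hv : Mx v j = v j) (hw : Mx w j = w j) (hlt : v j < w j) : False := by
  set π := foataPerm v with hπ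
  -- orbit lemma
  have Q : ∀ t : ℕ, ∃ l : Fin n, j ≤ l ∧ v l = (π ^ t) (v j) ∧ Mx v l = v j := by
    intro t
    induction t with
    | zero => exact ⟨j, le_rfl, by simp, hv⟩
    | succ t ih =>
      obtain ⟨l, hjl, hvl, hMl⟩ := ih
      have hstep : (π ^ (t + 1)) (v j) = foataFn v (v l) := by
        rw [pow_succ']
        rw [Equiv.Perm.mul_apply, ← hvl, hπ, foataPerm_apply]
      by_cases hl : (l : ℕ) + 1 < n
      · by_cases h2 : v ⟨(l : ℕ) + 1, hl⟩ < Mx v l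
        · refine ⟨⟨(l : ℕ) + 1, hl⟩, ?_, ?_, ?_⟩
          · exact le_trans hjl (by simp [Fin.le_def])
          · rw [hstep, foataFn_apply, dif_pos hl, if_pos h2]
          · rw [Mx_succ v hl, hMl, max_eq_left]
            exact le_of_lt (by rw [← hMl]; exact h2)
        · refine ⟨j, le_rfl, ?_, hv⟩
          rw [hstep, foataFn_apply, dif_pos hl, if_neg h2, hMl]
      · refine ⟨j, le_rfl, ?_, hv⟩
        rw [hstep, foataFn_apply, dif_neg hl, hMl]
  have P : ∀ t : ℕ, (π ^ t) (v j) ≤ v j := by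
    intro t
    obtain ⟨l, _, hvl, hMl⟩ := Q t
    rw [← hvl, ← hMl]
    exact le_Mx v le_rfl
  -- inverse via order
  set m := orderOf π with hm
  have hm1 : 0 < m := orderOf_pos π
  have hpow : ∀ s : ℕ, π ((π ^ (s + m - 1)) (v j)) = (π ^ s) (v j) := by
    intro s
    have hmul : π * π ^ (s + m - 1) = π ^ s := by
      rw [← pow_succ']
      have he : s + m - 1 + 1 = s + m := by omega
      rw [he, pow_add, pow_orderOf_eq_one, mul_one]
    calc π ((π ^ (s + m - 1)) (v j)) = (π * π ^ (s + m - 1)) (v j) := rfl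
      _ = (π ^ s) (v j) := by rw [hmul]
  -- position of x := v j in w
  set k := w.symm (v j) with hk
  have hwk : w k = v j := w.apply_symm_apply _
  have hjk : (j : ℕ) < (k : ℕ) := by
    rcases lt_trichotomy (k : ℕ) (j : ℕ) with hc | hc | hc
    · have : v k = w k := hpre k hc
      have : v k = v j := by rw [this, hwk]
      have : k = j := v.injective this
      omega
    · have : k = j := Fin.ext hc
      rw [this] at hwk
      exact absurd hwk.symm (ne_of_lt hlt)
    · exact hc
  have hMwj : ∀ p : Fin n, j ≤ p → v j < Mx w p := fun p hp =>
    lt_of_lt_of_le (by rw [← hw] at hlt; exact hlt) (Mx_mono w hp)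
  -- downward induction
  have hkn : (k : ℕ) < n := k.isLt
  have D : ∀ t : ℕ, t ≤ (k : ℕ) - (j : ℕ) →
      ∃ s : ℕ, w ⟨(k : ℕ) - t, by omega⟩ = (π ^ s) (v j) := by
    intro t
    induction t with
    | zero =>
      intro _
      refine ⟨0, ?_⟩
      have he : (⟨(k : ℕ) - 0, by omega⟩ : Fin n) = k :=
        Fin.ext (show (k : ℕ) - 0 = (k : ℕ) by omega)
      rw [he, pow_zero]
      exact hwk
    | succ t ih =>
      intro ht
      obtain ⟨s, hs⟩ := ih (by omega)
      have hp1 : (k : ℕ) - (t + 1) + 1 < n := by omega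
      have hpn : (k : ℕ) - (t + 1) < n := by omega
      set p : Fin n := ⟨(k : ℕ) - (t + 1), hpn⟩ with hpdef
      have hpval : (p : ℕ) = (k : ℕ) - (t + 1) := rfl
      have hp1' : (p : ℕ) + 1 < n := by omega
      have hpe : (⟨(p : ℕ) + 1, hp1'⟩ : Fin n) = ⟨(k : ℕ) - t, by omega⟩ :=
        Fin.ext (by show (p : ℕ) + 1 = (k : ℕ) - t; omega)
      have hjp : j ≤ p := by rw [Fin.le_def, hpval]; omega
      have hult : w ⟨(p : ℕ) + 1, hp1'⟩ < Mx w p := by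
        rw [hpe, hs]
        exact lt_of_le_of_lt (P s) (hMwj p hjp)
      have hrule : foataFn w (w p) = w ⟨(p : ℕ) + 1, hp1'⟩ := by
        rw [foataFn_apply, dif_pos hp1', if_pos hult]
      have hfv : foataFn v (w p) = (π ^ s) (v j) := by
        rw [h (w p), hrule, hpe, hs]
      have hfin : π (w p) = π ((π ^ (s + m - 1)) (v j)) := by
        rw [hpow s, hπ, foataPerm_apply, hfv]
      exact ⟨s + m - 1, π.injective hfin⟩
  obtain ⟨s, hs⟩ := D ((k : ℕ) - (j : ℕ)) le_rfl
  have hj' : (⟨(k : ℕ) - ((k : ℕ) - (j : ℕ)), by omega⟩ : Fin n) = j :=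
    Fin.ext (show (k : ℕ) - ((k : ℕ) - (j : ℕ)) = (j : ℕ) by omega)
  rw [hj'] at hs
  have hcon : w j ≤ v j := by rw [hs]; exact P s
  exact absurd hlt (not_lt.2 hcon)


lemma foataPerm_injective :
    Function.Injective (foataPerm : Equiv.Perm (Fin n) → Equiv.Perm (Fin n)) := by
  intro v w hvw
  by_contra hne
  have hfn : ∀ x, foataFn v x = foataFn w x := fun x => by
    rw [← foataPerm_apply, ← foataPerm_apply, hvw]
  have hex : ∃ i, v i ≠ w i := by
    by_contra hcon
    push_neg at hcon
    exact hne (Equiv.ext hcon)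
  set s : Finset (Fin n) := Finset.univ.filter (fun i => v i ≠ w i) with hs
  have hsne : s.Nonempty := by
    obtain ⟨i, hi⟩ := hex
    exact ⟨i, by simp [hs, hi]⟩
  set j := s.min' hsne with hjdef
  have hj : v j ≠ w j := by
    have hmem : j ∈ s := s.min'_mem hsne
    rw [hs, Finset.mem_filter] at hmem
    exact hmem.2
  have hmin : ∀ i : Fin n, i < j → v i = w i := by
    intro i hi
    by_contra hcon
    have : i ∈ s := by simp [hs, hcon]
    exact absurd (s.min'_le i this) (not_le.2 hi)
  -- both are new maxima at position j
  have hnm : Mx v j = v j ∧ Mx w j = w j := by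
    rcases Nat.eq_zero_or_pos (j : ℕ) with h0 | h0
    · constructor <;>
      · apply Mx_eq_self
        intro i hi
        have : i = j := Fin.ext (by have := Fin.le_def.1 hi; omega)
        rw [this]
    · have hpn : (j : ℕ) - 1 < n := by have := j.isLt; omega
      set p : Fin n := ⟨(j : ℕ) - 1, hpn⟩ with hpdef
      have hpval : (p : ℕ) = (j : ℕ) - 1 := rfl
      have hpj : p < j := by rw [Fin.lt_def, hpval]; omega
      have hp1 : (p : ℕ) + 1 < n := by have := j.isLt; omega
      have hpe : (⟨(p : ℕ) + 1, hp1⟩ : Fin n) = j :=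
        Fin.ext (by show (p : ℕ) + 1 = (j : ℕ); omega)
      have hvp : v p = w p := hmin p hpj
      have hM : Mx v p = Mx w p := Mx_congr (fun i hi => hmin i (lt_of_le_of_lt hi hpj))
      have heq : foataFn v (v p) = foataFn w (w p) := by rw [hfn (v p), hvp]
      rw [foataFn_apply, foataFn_apply, dif_pos hp1, dif_pos hp1, hpe] at heq
      have hMvj : ∀ i, i ≤ p → v i ≤ Mx v p := fun i hi => le_Mx v hi
      -- case analysis on the two ifs
      have hboth : Mx v p ≤ v j ∧ Mx w p ≤ w j := by
        by_cases h1 : v j < Mx v p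
        · rw [if_pos h1] at heq
          by_cases h2 : w j < Mx w p
          · rw [if_pos h2] at heq; exact absurd heq hj
          · rw [if_neg h2] at heq
            rw [← hM] at heq
            exact absurd heq (ne_of_lt h1)
        · rw [if_neg h1] at heq
          by_cases h2 : w j < Mx w p
          · rw [if_pos h2] at heq
            rw [hM] at heq
            exact absurd heq.symm (ne_of_lt h2)
          · exact ⟨not_lt.1 h1, not_lt.1 h2⟩
      constructor
      · apply Mx_eq_self
        intro i hi
        rcases eq_or_lt_of_le hi with he | hlt'
        · rw [he]
        · have : i ≤ p := by rw [Fin.le_def, hpval]; have := Fin.lt_def.1 hlt'; omega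
          exact le_trans (le_Mx v this) hboth.1
      · apply Mx_eq_self
        intro i hi
        rcases eq_or_lt_of_le hi with he | hlt'
        · rw [he]
        · have : i ≤ p := by rw [Fin.le_def, hpval]; have := Fin.lt_def.1 hlt'; omega
          exact le_trans (le_Mx w this) hboth.2
  rcases lt_or_gt_of_ne hj with hlt | hlt
  · exact key hfn j hmin hnm.1 hnm.2 hlt
  · exact key (fun x => (hfn x).symm) j (fun i hi => (hmin i hi).symm) hnm.2 hnm.1 hlt

end Foata

lemma oneLine_val {n : ℕ} (w : Equiv.Perm (Fin n)) {i : ℕ} (h : i < n) :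
    oneLine w (i + 1) = (w ⟨i, h⟩ : ℕ) + 1 := by
  have h2 : i + 1 - 1 < n := by simpa using h
  rw [oneLine, dif_pos h2]
  have he : (⟨i + 1 - 1, h2⟩ : Fin n) = ⟨i, h⟩ := Fin.ext (show i + 1 - 1 = i by omega)
  rw [he]

lemma depth_eq {n : ℕ} (π : Equiv.Perm (Fin n)) :
    depthStat π = ∑ x : Fin n, (if (x : ℕ) < (π x : ℕ) then (π x : ℕ) - (x : ℕ) else 0) := by
  rw [depthStat, Finset.sum_filter, ← Finset.Ico_add_one_right_eq_Icc, Finset.sum_Ico_eq_sum_range]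
  rw [show n + 1 - 1 = n from rfl]
  rw [← Fin.sum_univ_eq_sum_range
    (fun i => if 1 + i < oneLine π (1 + i) then oneLine π (1 + i) - (1 + i) else 0) n]
  apply Finset.sum_congr rfl
  intro x _
  rw [Nat.add_comm 1 (x : ℕ), oneLine_val π x.isLt]
  have : (⟨(x : ℕ), x.isLt⟩ : Fin n) = x := Fin.ext rfl
  rw [this]
  split_ifs <;> omega

lemma antiexc {n : ℕ} (π : Equiv.Perm (Fin n)) :
    (∑ x : Fin n, (if (x : ℕ) < (π x : ℕ) then (π x : ℕ) - (x : ℕ) else 0)) =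
      ∑ x : Fin n, (if (π x : ℕ) < (x : ℕ) then (x : ℕ) - (π x : ℕ) else 0) := by
  have hz : (∑ x : Fin n, (((x : ℕ) : ℤ) - ((π x : ℕ) : ℤ))) = 0 := by
    rw [Finset.sum_sub_distrib, Equiv.sum_comp π (fun x : Fin n => ((x : ℕ) : ℤ)), sub_self]
  have hpt : ∀ x : Fin n,
      ((if (π x : ℕ) < (x : ℕ) then (x : ℕ) - (π x : ℕ) else 0 : ℕ) : ℤ) =
        ((if (x : ℕ) < (π x : ℕ) then (π x : ℕ) - (x : ℕ) else 0 : ℕ) : ℤ) +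
          (((x : ℕ) : ℤ) - ((π x : ℕ) : ℤ)) := by
    intro x
    split_ifs <;> omega
  have hZ : ((∑ x : Fin n, (if (x : ℕ) < (π x : ℕ) then (π x : ℕ) - (x : ℕ) else 0) : ℕ) : ℤ) =
      ((∑ x : Fin n, (if (π x : ℕ) < (x : ℕ) then (x : ℕ) - (π x : ℕ) else 0) : ℕ) : ℤ) := by
    rw [Nat.cast_sum, Nat.cast_sum]
    rw [Finset.sum_congr rfl (fun x _ => hpt x), Finset.sum_add_distrib, hz, add_zero]
  exact Nat.cast_injective hZ

namespace Foata

/-- drop value at 0-indexed position `i` of the word `w`. -/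
def gDrop {n : ℕ} (w : Equiv.Perm (Fin n)) (i : ℕ) : ℕ :=
  if h : i + 1 < n then
    (if w ⟨i + 1, h⟩ < w ⟨i, Nat.lt_of_succ_lt h⟩ then
      (w ⟨i, Nat.lt_of_succ_lt h⟩ : ℕ) - (w ⟨i + 1, h⟩ : ℕ) else 0)
  else 0

variable {n : ℕ}

lemma pointwise (w : Equiv.Perm (Fin n)) (j : Fin n) :
    (if ((foataPerm w) (w j) : ℕ) < (w j : ℕ) then (w j : ℕ) - ((foataPerm w) (w j) : ℕ) else 0)
      = gDrop w (j : ℕ) := by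
  rw [foataPerm_apply, foataFn_apply w j, gDrop]
  by_cases hj : (j : ℕ) + 1 < n
  · rw [dif_pos hj, dif_pos hj]
    have hwle : w j ≤ Mx w j := le_Mx w le_rfl
    have hetaj : (⟨(j : ℕ), Nat.lt_of_succ_lt hj⟩ : Fin n) = j := Fin.ext rfl
    rw [hetaj]
    by_cases h2 : w ⟨(j : ℕ) + 1, hj⟩ < w j
    · have h3 : w ⟨(j : ℕ) + 1, hj⟩ < Mx w j := lt_of_lt_of_le h2 hwle
      rw [if_pos h3, if_pos (Fin.lt_def.1 h2), if_pos h2]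
    · rw [if_neg h2]
      by_cases h3 : w ⟨(j : ℕ) + 1, hj⟩ < Mx w j
      · rw [if_pos h3, if_neg]
        exact fun hc => h2 (Fin.lt_def.2 hc)
      · rw [if_neg h3, if_neg]
        have := le_Mx w (le_refl j)
        exact not_lt.2 (Fin.le_def.1 this)
  · rw [dif_neg hj, dif_neg hj, if_neg]
    have := le_Mx w (le_refl j)
    exact not_lt.2 (Fin.le_def.1 this)

lemma drp_eq_gDrop {n : ℕ} (hn : 0 < n) (w : Equiv.Perm (Fin n)) :
    drpStat w = ∑ i ∈ Finset.range n, gDrop w i := by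
  rw [drpStat, Finset.sum_filter, ← Finset.Ico_add_one_right_eq_Icc, Finset.sum_Ico_eq_sum_range]
  rw [show n - 1 + 1 - 1 = n - 1 from rfl]
  have hsplit : ∑ i ∈ Finset.range n, gDrop w i =
      ∑ i ∈ Finset.range (n - 1), gDrop w i + gDrop w (n - 1) := by
    have hr : Finset.range n = Finset.range ((n - 1) + 1) := by
      rw [Nat.sub_add_cancel hn]
    rw [hr, Finset.sum_range_succ]
  have hlast : gDrop w (n - 1) = 0 := by
    rw [gDrop, dif_neg (by omega)]
  rw [hsplit, hlast, add_zero]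
  apply Finset.sum_congr rfl
  intro i hi
  have hi' : i < n - 1 := Finset.mem_range.1 hi
  have h1 : i < n := by omega
  have h2 : i + 1 < n := by omega
  rw [show 1 + i + 1 = (i + 1) + 1 by omega, oneLine_val w h2,
    show 1 + i = i + 1 by omega, oneLine_val w h1, gDrop, dif_pos h2]
  have : (⟨i, Nat.lt_of_succ_lt h2⟩ : Fin n) = ⟨i, h1⟩ := Fin.ext rfl
  rw [this]
  simp only [Fin.lt_def]
  split_ifs <;> omega

lemma drp_foata {n : ℕ} (hn : 0 < n) (w : Equiv.Perm (Fin n)) :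
    depthStat (foataPerm w) = drpStat w := by
  rw [depth_eq, antiexc, drp_eq_gDrop hn w,
    ← Fin.sum_univ_eq_sum_range (gDrop w) n]
  rw [← Equiv.sum_comp w
    (fun x => if ((foataPerm w) x : ℕ) < (x : ℕ) then (x : ℕ) - ((foataPerm w) x : ℕ) else 0)]
  exact Finset.sum_congr rfl fun j _ => pointwise w j

end Foata


/-- ∑ q^{depth(π)} = ∑ q^{drp(π)} as polynomials in q over ℤ. -/
theorem stmt6 (n : ℕ) (hn : 0 < n) :
    (∑ π : Equiv.Perm (Fin n), (Polynomial.X : Polynomial ℤ) ^ depthStat π) =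
      ∑ π : Equiv.Perm (Fin n), (Polynomial.X : Polynomial ℤ) ^ drpStat π := by
  have hbij : Function.Bijective
      (Foata.foataPerm : Equiv.Perm (Fin n) → Equiv.Perm (Fin n)) :=
    Finite.injective_iff_bijective.1 Foata.foataPerm_injective
  rw [← Function.Bijective.sum_comp hbij
    (fun π => (Polynomial.X : Polynomial ℤ) ^ depthStat π)]
  exact Finset.sum_congr rfl fun w _ => by rw [Foata.drp_foata hn w]
end
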